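/- arXiv:2501.19398 — 3 statements merged into one kernel-verified Lean document; each statement's English description precedes it below -/
import Mathlib

section
/- Suppose the secret word w* is uniform on a set W of K words, and conditioned on w* = w, the vector of N−1 responses r consists of i.i.d. draws from a distribution D^w on a finite set R, where KL(D^{w_i} || D^{w_j}) ≤ α for all pairs w_i, w_j ∈ W. Then for every (possibly randomized) estimator A mapping R^{N−1} to W, the probability that A(r) = w* is at most 1/K + ((K−1)/K)·sqrt((N−1)α). -/
/-!
Let `M w w'` be the probability that the estimator answers `w` when the secret is `w'`. The
success probability is the average of the diagonal of `M`; as every column of `M` sums to one, it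
exceeds `1/K` by at most `(K-1)/K` times the largest gap `M w w - M w w'`. That gap is at most the
total variation distance between the product laws `(D^w)^{N-1}` and `(D^{w'})^{N-1}`, which Le Cam's
inequality bounds by `√(1 - ρ²)` for the Bhattacharyya coefficient `ρ`. The coefficient tensorizes,
`ρ(Pⁿ, Qⁿ) = ρ(P, Q)ⁿ`, and `1 - ρ(P, Q) ≤ KL(P ‖ Q) / 2`, so by Bernoulli's inequality the gap is
at most `√(1 - ρ^{2n}) ≤ √(2n(1 - ρ)) ≤ √(n · KL)`.
-/

open Finset Real

def IsPMF {R : Type*} [Fintype R] (D : R → ℝ) : Prop :=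
  (∀ r, 0 ≤ D r) ∧ ∑ r, D r = 1

noncomputable def KLdiv {R : Type*} [Fintype R] (D1 D2 : R → ℝ) : ℝ :=
  ∑ r, D1 r * Real.log (D1 r / D2 r)

section Bhattacharyya

variable {S : Type*} [Fintype S]

noncomputable def bhattacharyya (P Q : S → ℝ) : ℝ :=
  ∑ s, √(P s * Q s)

theorem IsPMF.pi {P : S → ℝ} (hP : IsPMF P) (n : ℕ) :
    IsPMF fun x : Fin n → S => ∏ i, P (x i) :=
  ⟨fun _ => prod_nonneg fun i _ => hP.1 _, by rw [← Fintype.sum_pow, hP.2, one_pow]⟩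

theorem IsPMF.le_one {P : S → ℝ} (hP : IsPMF P) (s : S) : P s ≤ 1 :=
  hP.2 ▸ single_le_sum (fun t _ => hP.1 t) (mem_univ s)

theorem bhattacharyya_pi {P Q : S → ℝ} (hP : ∀ s, 0 ≤ P s) (hQ : ∀ s, 0 ≤ Q s) (n : ℕ) :
    bhattacharyya (fun x : Fin n → S => ∏ i, P (x i)) (fun x => ∏ i, Q (x i)) =
      bhattacharyya P Q ^ n := by
  rw [bhattacharyya, bhattacharyya, Fintype.sum_pow]
  refine sum_congr rfl fun x _ => ?_
  rw [← prod_mul_distrib, sqrt_prod _ fun i _ => mul_nonneg (hP _) (hQ _)]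

theorem sum_sub_mul_le_half_sum_abs_sub {P Q f : S → ℝ} (hPQ : ∑ s, P s = ∑ s, Q s)
    (hf0 : ∀ s, 0 ≤ f s) (hf1 : ∀ s, f s ≤ 1) :
    ∑ s, (P s - Q s) * f s ≤ (∑ s, |P s - Q s|) / 2 := by
  have hmax : ∀ s, (P s - Q s) * f s ≤ (|P s - Q s| + (P s - Q s)) / 2 := by
    intro s
    rcases le_total 0 (P s - Q s) with h | h
    · rw [abs_of_nonneg h]; nlinarith [hf1 s]
    · rw [abs_of_nonpos h]; nlinarith [hf0 s]
  calc ∑ s, (P s - Q s) * f s ≤ ∑ s, (|P s - Q s| + (P s - Q s)) / 2 :=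
        sum_le_sum fun s _ => hmax s
    _ = (∑ s, |P s - Q s|) / 2 := by
        rw [← sum_div, sum_add_distrib, sum_sub_distrib, hPQ, sub_self, add_zero]

theorem sq_sum_abs_sq_sub_sq_le {a b : S → ℝ} (ha : ∑ s, a s ^ 2 = 1) (hb : ∑ s, b s ^ 2 = 1) :
    (∑ s, |a s ^ 2 - b s ^ 2|) ^ 2 ≤ 4 * (1 - (∑ s, a s * b s) ^ 2) := by
  set c := ∑ s, a s * b s
  have hminus : ∑ s, (a s - b s) ^ 2 = 2 - 2 * c := by
    simp only [sub_sq, sum_add_distrib, sum_sub_distrib, ha, hb, c, mul_sum]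
    ring_nf
  have hplus : ∑ s, (a s + b s) ^ 2 = 2 + 2 * c := by
    simp only [add_sq, sum_add_distrib, ha, hb, c, mul_sum]
    ring_nf
  calc (∑ s, |a s ^ 2 - b s ^ 2|) ^ 2 = (∑ s, |a s - b s| * |a s + b s|) ^ 2 := by
        simp only [← abs_mul, sq_sub_sq, mul_comm (a _ + b _)]
    _ ≤ (∑ s, |a s - b s| ^ 2) * ∑ s, |a s + b s| ^ 2 := sum_mul_sq_le_sq_mul_sq _ _ _
    _ = 4 * (1 - c ^ 2) := by simp only [sq_abs, hminus, hplus]; ring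

theorem sum_sub_mul_le_sqrt_one_sub_bhattacharyya_sq {P Q f : S → ℝ} (hP : IsPMF P)
    (hQ : IsPMF Q) (hf0 : ∀ s, 0 ≤ f s) (hf1 : ∀ s, f s ≤ 1) :
    ∑ s, (P s - Q s) * f s ≤ √(1 - bhattacharyya P Q ^ 2) := by
  have hsum_sq : ∀ {P : S → ℝ}, IsPMF P → ∑ s, √(P s) ^ 2 = 1 := fun hP => by
    simp only [sq_sqrt (hP.1 _), hP.2]
  have hL1 := sq_sum_abs_sq_sub_sq_le (hsum_sq hP) (hsum_sq hQ)
  simp only [sq_sqrt (hP.1 _), sq_sqrt (hQ.1 _), ← sqrt_mul (hP.1 _)] at hL1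
  calc ∑ s, (P s - Q s) * f s ≤ (∑ s, |P s - Q s|) / 2 :=
        sum_sub_mul_le_half_sum_abs_sub (hP.2.trans hQ.2.symm) hf0 hf1
    _ = √(((∑ s, |P s - Q s|) / 2) ^ 2) := (sqrt_sq (by positivity)).symm
    _ ≤ √(1 - bhattacharyya P Q ^ 2) := sqrt_le_sqrt (by rw [bhattacharyya]; linarith)

theorem two_mul_sub_sqrt_mul_le_mul_log_div {p q : ℝ} (hp : 0 < p) (hq : 0 < q) :
    2 * (p - √(p * q)) ≤ p * log (p / q) := by
  set t := √(q / p)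
  have ht : 0 < t := sqrt_pos.mpr (div_pos hq hp)
  have hlog : log (p / q) = -2 * log t := by
    rw [log_sqrt (div_pos hq hp).le, ← inv_div, log_inv]; ring
  have hpt : p * t = √(p * q) := by
    rw [show p * q = q / p * (p * p) by field_simp, sqrt_mul (div_pos hq hp).le,
      sqrt_mul_self hp.le, mul_comm]
  rw [hlog, ← hpt]
  nlinarith [log_le_sub_one_of_pos ht]

theorem one_sub_bhattacharyya_le_KLdiv_div_two {P Q : S → ℝ} (hP : IsPMF P)
    (hQ : ∀ s, 0 ≤ Q s) (hPQ : ∀ s, Q s = 0 → P s = 0) :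
    1 - bhattacharyya P Q ≤ KLdiv P Q / 2 := by
  have hterm : ∀ s, 2 * (P s - √(P s * Q s)) ≤ P s * log (P s / Q s) := by
    intro s
    rcases (hQ s).eq_or_lt with hQs | hQs
    · simp [hPQ s hQs.symm]
    rcases (hP.1 s).eq_or_lt with hPs | hPs
    · simp [← hPs]
    exact two_mul_sub_sqrt_mul_le_mul_log_div hPs hQs
  have := sum_le_sum fun s (_ : s ∈ univ) => hterm s
  rw [← mul_sum, sum_sub_distrib, hP.2] at this
  rw [bhattacharyya, KLdiv]
  linarith

theorem sum_pi_sub_mul_le_sqrt_mul_KLdiv {P Q : S → ℝ} (hP : IsPMF P) (hQ : IsPMF Q)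
    (hPQ : ∀ s, Q s = 0 → P s = 0) (n : ℕ) {f : (Fin n → S) → ℝ} (hf0 : ∀ x, 0 ≤ f x)
    (hf1 : ∀ x, f x ≤ 1) :
    ∑ x : Fin n → S, (∏ i, P (x i) - ∏ i, Q (x i)) * f x ≤ √(n * KLdiv P Q) := by
  have hKL := one_sub_bhattacharyya_le_KLdiv_div_two hP hQ.1 hPQ
  set ρ := bhattacharyya P Q
  have hρ : 0 ≤ ρ := sum_nonneg fun s _ => sqrt_nonneg _
  have hbernoulli : 1 + 2 * n * (ρ - 1) ≤ ρ ^ (2 * n) := by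
    simpa using one_add_mul_le_pow (by linarith : -2 ≤ ρ - 1) (2 * n)
  calc _ ≤ √(1 - ρ ^ (2 * n)) := by
        rw [pow_mul', ← bhattacharyya_pi hP.1 hQ.1]
        exact sum_sub_mul_le_sqrt_one_sub_bhattacharyya_sq (hP.pi n) (hQ.pi n) hf0 hf1
    _ ≤ √(n * KLdiv P Q) := by
        refine sqrt_le_sqrt ?_
        nlinarith [(n.cast_nonneg : (0 : ℝ) ≤ n)]

end Bhattacharyya

theorem sum_diag_le_of_sum_eq_one {W : Type*} [Fintype W] [Nonempty W] {M : W → W → ℝ}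
    {β : ℝ} (hcol : ∀ w', ∑ w, M w w' = 1) (hM : ∀ w w', M w w - M w w' ≤ β) :
    ∑ w, M w w ≤ 1 + (Fintype.card W - 1) * β := by
  classical
  set K : ℝ := (Fintype.card W : ℝ)
  have hK : 0 < K := Nat.cast_pos.mpr Fintype.card_pos
  have hrow : ∀ w, ∑ w', (M w w - M w w') ≤ (K - 1) * β := fun w => by
    rw [← add_sum_erase _ _ (mem_univ w), sub_self, zero_add]
    calc ∑ w' ∈ univ.erase w, (M w w - M w w') ≤ ∑ w' ∈ univ.erase w, β :=
          sum_le_sum fun w' _ => hM w w'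
      _ = (K - 1) * β := by
          rw [sum_const, card_erase_of_mem (mem_univ w), card_univ, nsmul_eq_mul,
            Nat.cast_pred Fintype.card_pos]
  have hsum : ∑ w, ∑ w', M w w' = K := by
    rw [sum_comm]; simp [hcol, K]
  refine le_of_mul_le_mul_left ?_ hK
  calc K * ∑ w, M w w = ∑ w, ∑ w', M w w' + ∑ w, ∑ w', (M w w - M w w') := by
        simp [sum_sub_distrib, mul_sum, K]
    _ ≤ K + ∑ _w : W, (K - 1) * β := by
        rw [hsum]; gcongr with w; exact hrow w
    _ = K * (1 + (K - 1) * β) := by simp only [sum_const, card_univ, nsmul_eq_mul]; ring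

theorem secret_word_concealment_general {R W : Type*} [Fintype R] [Fintype W]
    (N K : ℕ) (hN : 2 ≤ N) (hK : 1 ≤ K) (hcard : Fintype.card W = K)
    (α : ℝ)
    (D : W → R → ℝ) (hpmf : ∀ w, IsPMF (D w))
    (hac : ∀ w w' r, D w r = 0 ↔ D w' r = 0)
    (hKL : ∀ w w', KLdiv (D w) (D w') ≤ α)
    (A : (Fin (N - 1) → R) → W → ℝ) (hA : ∀ x, IsPMF (A x)) :
    (1 / (K : ℝ)) * ∑ w : W, ∑ x : Fin (N - 1) → R, (∏ i, D w (x i)) * A x w ≤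
      1 / (K : ℝ) + (((K : ℝ) - 1) / K) * Real.sqrt (((N : ℝ) - 1) * α) := by
  subst hcard
  have : Nonempty W := Fintype.card_pos_iff.mp hK
  have hcast : ((N - 1 : ℕ) : ℝ) = N - 1 := Nat.cast_pred (by omega)
  set M : W → W → ℝ := fun w w' => ∑ x, (∏ i, D w' (x i)) * A x w
  have hcol : ∀ w', ∑ w, M w w' = 1 := fun w' => by
    rw [sum_comm]
    simp_rw [← mul_sum, (hA _).2, mul_one]
    exact ((hpmf w').pi _).2
  have hpair : ∀ w w', M w w - M w w' ≤ √((N - 1) * α) := fun w w' => by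
    rw [← sum_sub_distrib, ← hcast]
    simp_rw [← sub_mul]
    calc _ ≤ √((N - 1 : ℕ) * KLdiv (D w) (D w')) :=
          sum_pi_sub_mul_le_sqrt_mul_KLdiv (hpmf w) (hpmf w') (fun r => (hac w w' r).mpr) _
            (fun x => (hA x).1 w) (fun x => (hA x).le_one w)
      _ ≤ √((N - 1 : ℕ) * α) := by gcongr; exact hKL w w'
  calc _ ≤ 1 / (Fintype.card W : ℝ) * (1 + (Fintype.card W - 1) * √((N - 1) * α)) := by
        gcongr; exact sum_diag_le_of_sum_eq_one hcol hpair
    _ = _ := by ring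

/-- Proposition 2: if the secret word `w*` is uniform on `W` (of size `K`) and, given
`w* = w`, the `N-1` responses are i.i.d. from `D w`, where the family `{D w}` is
`α`-KL pairwise concealing, then every (randomized) estimator `A : R^{N-1} → W`
guesses `w*` correctly with probability at most `1/K + ((K-1)/K)·√((N-1)α)`. -/
theorem secret_word_concealment {R W : Type*} [Fintype R] [Fintype W] [DecidableEq W]
    (N K : ℕ) (hN : 2 ≤ N) (hK : 1 ≤ K) (hcard : Fintype.card W = K)
    (α : ℝ) (hα : 0 ≤ α)
    (D : W → R → ℝ) (hpmf : ∀ w, IsPMF (D w))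
    (hac : ∀ w w' r, D w r = 0 ↔ D w' r = 0)
    (hKL : ∀ w w', KLdiv (D w) (D w') ≤ α)
    (A : (Fin (N - 1) → R) → W → ℝ) (hA : ∀ x, IsPMF (A x)) :
    (1 / (K : ℝ)) * ∑ w : W, ∑ x : Fin (N - 1) → R, (∏ i, D w (x i)) * A x w ≤
      1 / (K : ℝ) + (((K : ℝ) - 1) / K) * Real.sqrt (((N : ℝ) - 1) * α) :=
  secret_word_concealment_general N K hN hK hcard α D hpmf hac hKL A hA
end

section
/- Concentration of the empirical 3-bin distribution: let X_1,...,X_m be i.i.d. samples from a categorical distribution p = (p_1, p_2, p_3) on three categories, and let p̂ be the empirical distribution. Then Pr(‖p − p̂‖_1 ≥ α/2) ≤ 6·exp(−m·φ·α²/16), where θ = max over subsets A of {p_1,p_2,p_3} of min(Σ_{a∈A} a, 1 − Σ_{a∈A} a) and φ = (1/(1−2θ))·log((1−θ)/θ) (with φ = 2 when θ = 1/2). -/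
open Finset Real

/-- A probability vector on `Fin 3`. -/
def IsProbVec (p : Fin 3 → ℝ) : Prop :=
  (∀ i, 0 ≤ p i) ∧ ∑ i, p i = 1

/-- The empirical distribution of `m` samples `x : Fin m → Fin 3`. -/
noncomputable def empDist (m : ℕ) (x : Fin m → Fin 3) (j : Fin 3) : ℝ :=
  ((univ.filter (fun i => x i = j)).card : ℝ) / m

/-- `θ = max_{A ⊆ {p₁,p₂,p₃}} min(Σ_{a∈A} a, 1 - Σ_{a∈A} a)`. -/
noncomputable def thetaOf (p : Fin 3 → ℝ) : ℝ :=
  (univ : Finset (Fin 3)).powerset.sup' ⟨∅, Finset.empty_mem_powerset _⟩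
    (fun A => min (∑ a ∈ A, p a) (1 - ∑ a ∈ A, p a))

/-- `φ(θ) = (1/(1-2θ))·log((1-θ)/θ)` with the convention `φ = 2` at `θ = 1/2`. -/
noncomputable def phiOf (θ : ℝ) : ℝ :=
  if θ = 1 / 2 then 2 else (1 / (1 - 2 * θ)) * Real.log ((1 - θ) / θ)

/-!
The `L¹` distance `‖p - p̂‖₁` is twice the largest deviation `p(B) - p̂(B)` over the six
nonempty proper subsets `B` of the three categories, so a union bound reduces the claim to the
lower tail of the binomial count of samples falling in `B`. Chernoff's bound controls that tail by
`exp(-m D(q - α/4 ‖ q))` with `q = p(B)`; the sharp Pinsker-type inequality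
`D(a ‖ q) ≥ φ(q) (a - q)²` turns it into `exp(-m φ(q) α²/16)`; and `φ(q) ≥ φ(θ)` because
`φ(q) = 2 artanh(u) / u = ∑ 2 u^(2k) / (2k + 1)` with `u = |1 - 2q|` grows with `u`.

For the Pinsker-type inequality (`q ≤ 1/2` by symmetry), the derivative of
`a ↦ D(a ‖ q) - φ(q) (a - q)²` vanishes at `q` and at `1/2`; it is nonpositive on `(0, q]` since
`2 φ(q) q (1 - q) ≤ 1`, and nonnegative on `[q, 1/2]` by concavity. Hence the function is minimal at
`a = q` on `[0, 1/2]`, and it is symmetric under `a ↦ 1 - a`.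
-/

lemma phiOf_mul_one_sub_two_mul {q : ℝ} (h0 : 0 < q) (h1 : q < 1) :
    phiOf q * (1 - 2 * q) = log (1 - q) - log q := by
  rw [phiOf]
  split_ifs with h
  · norm_num [h]
  · rw [log_div (by linarith) h0.ne']
    field_simp [sub_ne_zero.mpr (show (1 : ℝ) ≠ 2 * q by intro h'; apply h; linarith)]

lemma phiOf_one_sub (q : ℝ) : phiOf (1 - q) = phiOf q := by
  have hq : 1 - q = 1 / 2 ↔ q = 1 / 2 := by constructor <;> intro h <;> linarith
  rw [phiOf, phiOf, sub_sub_cancel, ← inv_div (1 - q) q, log_inv,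
    show 1 - 2 * (1 - q) = -(1 - 2 * q) by ring]
  simp only [hq, one_div_neg_eq_neg_one_div, neg_mul_neg]

/-- With `u = 1 - 2q`, `φ(q) = log ((1 + u) / (1 - u)) / u = 2 artanh u / u`. -/
lemma hasSum_phiOf {q : ℝ} (h0 : 0 < q) (h1 : q < 1) :
    HasSum (fun k : ℕ => 2 / (2 * k + 1) * (1 - 2 * q) ^ (2 * k)) (phiOf q) := by
  by_cases hq : q = 1 / 2
  · subst hq
    rw [phiOf, if_pos rfl]
    convert hasSum_ite_eq 0 (2 : ℝ) using 2 with k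
    rcases k with _ | k <;> simp
  · have hu : 1 - 2 * q ≠ 0 := by intro h; apply hq; linarith
    have hs := (hasSum_log_sub_log_of_abs_lt_one (x := 1 - 2 * q)
      (abs_lt.mpr ⟨by linarith, by linarith⟩)).div_const (1 - 2 * q)
    rw [show 1 + (1 - 2 * q) = 2 * (1 - q) by ring, show 1 - (1 - 2 * q) = 2 * q by ring,
      log_mul two_ne_zero (by linarith), log_mul two_ne_zero h0.ne'] at hs
    have hterm : ∀ k : ℕ, 2 / (2 * k + 1) * (1 - 2 * q) ^ (2 * k)
        = 2 * (1 / (2 * k + 1)) * (1 - 2 * q) ^ (2 * k + 1) / (1 - 2 * q) := fun k => by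
      rw [pow_succ]; field_simp
    rw [phiOf, if_neg hq, log_div (by linarith) h0.ne',
      show 1 / (1 - 2 * q) * (log (1 - q) - log q)
        = (log 2 + log (1 - q) - (log 2 + log q)) / (1 - 2 * q) by ring]
    simpa only [hterm] using hs

lemma phiOf_nonneg {q : ℝ} (h0 : 0 < q) (h1 : q < 1) : 0 ≤ phiOf q :=
  (hasSum_phiOf h0 h1).nonneg fun k => by rw [pow_mul]; positivity

lemma phiOf_le_phiOf_of_abs_le {s t : ℝ} (hs0 : 0 < s) (hs1 : s < 1) (ht0 : 0 < t) (ht1 : t < 1)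
    (h : |1 - 2 * t| ≤ |1 - 2 * s|) : phiOf t ≤ phiOf s := by
  refine hasSum_le (fun k => ?_) (hasSum_phiOf ht0 ht1) (hasSum_phiOf hs0 hs1)
  rw [pow_mul, pow_mul, ← sq_abs, ← sq_abs (1 - 2 * s)]
  gcongr

lemma two_mul_phiOf_mul_le_one {q : ℝ} (h0 : 0 < q) (h1 : q < 1) :
    2 * phiOf q * (q * (1 - q)) ≤ 1 := by
  set u := 1 - 2 * q
  have hu : u ^ 2 < 1 := by nlinarith
  have hφ : phiOf q ≤ 2 * (1 - u ^ 2)⁻¹ := by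
    refine hasSum_le (fun k => ?_) (hasSum_phiOf h0 h1)
      ((hasSum_geometric_of_lt_one (sq_nonneg u) hu).mul_left 2)
    rw [pow_mul]
    have hk : (1 : ℝ) ≤ 2 * k + 1 := by linarith [(Nat.cast_nonneg k : (0 : ℝ) ≤ k)]
    exact mul_le_mul_of_nonneg_right (div_le_self zero_le_two hk) (by positivity)
  have hu' : 0 < 1 - u ^ 2 := by linarith
  calc 2 * phiOf q * (q * (1 - q)) = phiOf q * (1 - u ^ 2) / 2 := by ring
    _ ≤ 2 * (1 - u ^ 2)⁻¹ * (1 - u ^ 2) / 2 := by gcongr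
    _ = 1 := by field_simp

/-- The binary relative entropy `D(a ‖ q) = a log (a / q) + (1 - a) log ((1 - a) / (1 - q))`. -/
noncomputable def binKL (a q : ℝ) : ℝ := -binEntropy a - a * log q - (1 - a) * log (1 - q)

lemma binKL_one_sub_one_sub (a q : ℝ) : binKL (1 - a) (1 - q) = binKL a q := by
  simp only [binKL, binEntropy_one_sub, sub_sub_cancel]
  ring

noncomputable def binKLSubSqDeriv (q c a : ℝ) : ℝ :=
  log a - log (1 - a) - log q + log (1 - q) - 2 * c * (a - q)

lemma hasDerivAt_binKL_sub_sq {q c a : ℝ} (h0 : 0 < a) (h1 : a < 1) :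
    HasDerivAt (fun x => binKL x q - c * (x - q) ^ 2) (binKLSubSqDeriv q c a) a := by
  have hlin := ((hasDerivAt_id' a).mul_const (log q)).add
    (((hasDerivAt_id' a).const_sub 1).mul_const (log (1 - q)))
  have hsq := (((hasDerivAt_id' a).sub_const q).pow 2).const_mul c
  refine ((((hasDerivAt_binEntropy h0.ne' h1.ne).neg.sub hlin).sub hsq).congr_deriv ?_)
    |>.congr_of_eventuallyEq (.of_forall fun x => ?_)
  · simp only [binKLSubSqDeriv]; ring
  · simp only [binKL, Pi.add_apply, Pi.sub_apply, Pi.neg_apply, Pi.pow_apply]; ring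

lemma hasDerivAt_binKLSubSqDeriv {q c a : ℝ} (h0 : 0 < a) (h1 : a < 1) :
    HasDerivAt (binKLSubSqDeriv q c) (a⁻¹ + (1 - a)⁻¹ - 2 * c) a := by
  have hlog1 := ((hasDerivAt_id' a).const_sub 1).log (by linarith)
  have hlin := ((hasDerivAt_id' a).sub_const q).const_mul (2 * c)
  refine ((((hasDerivAt_log h0.ne').sub hlog1).sub_const (log q)).add_const
    (log (1 - q))).sub hlin |>.congr_deriv ?_
  field_simp
  ring

lemma hasDerivAt_inv_add_inv_one_sub {a : ℝ} (h0 : 0 < a) (h1 : a < 1) (c : ℝ) :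
    HasDerivAt (fun x => x⁻¹ + (1 - x)⁻¹ - 2 * c) (((1 - a) ^ 2)⁻¹ - (a ^ 2)⁻¹) a := by
  refine ((hasDerivAt_inv h0.ne').add
    (((hasDerivAt_id' a).const_sub 1).inv (by linarith))).sub_const (2 * c) |>.congr_deriv ?_
  ring

lemma binKL_self (q : ℝ) : binKL q q = 0 := by
  simp only [binKL, binEntropy, log_inv]
  ring

section QuadraticLowerBound

variable {q c : ℝ}

lemma binKLSubSqDeriv_nonpos (hq : q ≤ 1 / 2) (hc0 : 0 ≤ c) (hcq : 2 * c * (q * (1 - q)) ≤ 1)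
    {a : ℝ} (ha0 : 0 < a) (haq : a ≤ q) : binKLSubSqDeriv q c a ≤ 0 := by
  have hmono : MonotoneOn (binKLSubSqDeriv q c) (Set.Ioc 0 q) := by
    refine monotoneOn_of_hasDerivWithinAt_nonneg (f' := fun x => x⁻¹ + (1 - x)⁻¹ - 2 * c)
      (convex_Ioc 0 q) (fun x hx => ?_) (fun x hx => ?_) (fun x hx => ?_)
    · exact (hasDerivAt_binKLSubSqDeriv hx.1 (by linarith [hx.2])).continuousAt
        |>.continuousWithinAt
    · rw [interior_Ioc] at hx
      exact (hasDerivAt_binKLSubSqDeriv hx.1 (by linarith [hx.2])).hasDerivWithinAt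
    · rw [interior_Ioc] at hx
      obtain ⟨hx0, hxq⟩ := hx
      have hxx : 2 * c * (x * (1 - x)) ≤ 1 :=
        le_trans (mul_le_mul_of_nonneg_left (by nlinarith) (by positivity)) hcq
      rw [inv_add_inv hx0.ne' (by linarith), add_sub_cancel, sub_nonneg,
        le_div_iff₀ (by nlinarith)]
      linarith
  have hq0 : binKLSubSqDeriv q c q = 0 := by simp [binKLSubSqDeriv]
  exact (hmono ⟨ha0, haq⟩ ⟨ha0.trans_le haq, le_rfl⟩ haq).trans_eq hq0

lemma binKLSubSqDeriv_nonneg (hq0 : 0 < q) (hc : c * (1 - 2 * q) = log (1 - q) - log q)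
    {a : ℝ} (hqa : q ≤ a) (ha : a ≤ 1 / 2) : 0 ≤ binKLSubSqDeriv q c a := by
  have hconc : ConcaveOn ℝ (Set.Icc q (1 / 2)) (binKLSubSqDeriv q c) := by
    refine concaveOn_of_hasDerivWithinAt2_nonpos (f' := fun x => x⁻¹ + (1 - x)⁻¹ - 2 * c)
      (f'' := fun x => ((1 - x) ^ 2)⁻¹ - (x ^ 2)⁻¹) (convex_Icc _ _)
      (fun x hx => ?_) (fun x hx => ?_) (fun x hx => ?_) (fun x hx => ?_)
    · exact (hasDerivAt_binKLSubSqDeriv (hq0.trans_le hx.1) (by linarith [hx.2]))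
        |>.continuousAt.continuousWithinAt
    all_goals rw [interior_Icc] at hx
    · exact (hasDerivAt_binKLSubSqDeriv (hq0.trans hx.1) (by linarith [hx.2])).hasDerivWithinAt
    · exact (hasDerivAt_inv_add_inv_one_sub (hq0.trans hx.1) (by linarith [hx.2]) c)
        |>.hasDerivWithinAt
    · have hx0 : 0 < x := hq0.trans hx.1
      rw [sub_nonpos]
      exact inv_anti₀ (by positivity) (pow_le_pow_left₀ hx0.le (by linarith [hx.2]) 2)
  have hq : binKLSubSqDeriv q c q = 0 := by simp [binKLSubSqDeriv]
  have hhalf : binKLSubSqDeriv q c (1 / 2) = 0 := by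
    simp only [binKLSubSqDeriv]
    norm_num
    linarith
  have := hconc.min_le_of_mem_Icc (Set.left_mem_Icc.2 (hqa.trans ha))
    (Set.right_mem_Icc.2 (hqa.trans ha)) ⟨hqa, ha⟩
  rwa [hq, hhalf, min_self] at this

lemma mul_sq_le_binKL_of_le_half (hq0 : 0 < q) (hq : q ≤ 1 / 2) (hc0 : 0 ≤ c)
    (hcq : 2 * c * (q * (1 - q)) ≤ 1) (hc : c * (1 - 2 * q) = log (1 - q) - log q)
    {a : ℝ} (ha0 : 0 ≤ a) (ha : a ≤ 1 / 2) : c * (a - q) ^ 2 ≤ binKL a q := by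
  have hcont : Continuous fun x => binKL x q - c * (x - q) ^ 2 := by
    unfold binKL; fun_prop
  suffices binKL q q - c * (q - q) ^ 2 ≤ binKL a q - c * (a - q) ^ 2 by
    norm_num [binKL_self] at this
    linarith
  rcases le_total a q with haq | hqa
  · refine antitoneOn_of_hasDerivWithinAt_nonpos (f' := binKLSubSqDeriv q c) (convex_Icc 0 q)
      hcont.continuousOn
      (fun x hx => ?_) (fun x hx => ?_) ⟨ha0, haq⟩ ⟨hq0.le, le_rfl⟩ haq
    all_goals rw [interior_Icc] at hx
    · exact (hasDerivAt_binKL_sub_sq hx.1 (by linarith [hx.2])).hasDerivWithinAt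
    · exact binKLSubSqDeriv_nonpos hq hc0 hcq hx.1 hx.2.le
  · refine monotoneOn_of_hasDerivWithinAt_nonneg (f' := binKLSubSqDeriv q c)
      (convex_Icc q (1 / 2)) hcont.continuousOn
      (fun x hx => ?_) (fun x hx => ?_) ⟨le_rfl, hq⟩ ⟨hqa, ha⟩ hqa
    all_goals rw [interior_Icc] at hx
    · exact (hasDerivAt_binKL_sub_sq (hq0.trans hx.1) (by linarith [hx.2])).hasDerivWithinAt
    · exact binKLSubSqDeriv_nonneg hq0 hc hx.1.le hx.2.le

lemma binKL_one_sub_sub_mul_sq (hc : c * (1 - 2 * q) = log (1 - q) - log q) (a : ℝ) :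
    binKL (1 - a) q - c * (1 - a - q) ^ 2 = binKL a q - c * (a - q) ^ 2 := by
  simp only [binKL, binEntropy_one_sub]
  linear_combination (2 * a - 1) * hc

end QuadraticLowerBound

theorem phiOf_mul_sq_le_binKL {q a : ℝ} (hq0 : 0 < q) (hq1 : q < 1) (ha0 : 0 ≤ a)
    (ha1 : a ≤ 1) :
    phiOf q * (a - q) ^ 2 ≤ binKL a q := by
  wlog hq : q ≤ 1 / 2 generalizing q a
  · have := this (q := 1 - q) (a := 1 - a) (by linarith) (by linarith) (by linarith)
      (by linarith) (by linarith)
    rwa [phiOf_one_sub, binKL_one_sub_one_sub, show 1 - a - (1 - q) = -(a - q) by ring,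
      neg_sq] at this
  have hc := phiOf_mul_one_sub_two_mul hq0 hq1
  have hc0 := phiOf_nonneg hq0 hq1
  have hcq := two_mul_phiOf_mul_le_one hq0 hq1
  rcases le_total a (1 / 2) with ha | ha
  · exact mul_sq_le_binKL_of_le_half hq0 hq hc0 hcq hc ha0 ha
  · have := mul_sq_le_binKL_of_le_half hq0 hq hc0 hcq hc (a := 1 - a) (by linarith)
      (by linarith)
    linarith [binKL_one_sub_sub_mul_sq hc a]

section IidProb

variable {α : Type*} [Fintype α] {p : α → ℝ} {m : ℕ}

variable (p m) in
noncomputable def iidProb (E : (Fin m → α) → Prop) [DecidablePred E] : ℝ :=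
  ∑ x : Fin m → α, (∏ i, p (x i)) * if E x then 1 else 0

lemma mul_iidProb_le_sum (hp : ∀ j, 0 ≤ p j) {E : (Fin m → α) → Prop} [DecidablePred E]
    {c : ℝ} {g : (Fin m → α) → ℝ} (hE : ∀ x, E x → c ≤ g x) (hg : ∀ x, 0 ≤ g x) :
    c * iidProb p m E ≤ ∑ x, (∏ i, p (x i)) * g x := by
  rw [iidProb, mul_sum]
  refine sum_le_sum fun x _ => ?_
  have hx : 0 ≤ ∏ i, p (x i) := prod_nonneg fun i _ => hp _
  split_ifs with h
  · nlinarith [hE x h]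
  · simpa using mul_nonneg hx (hg x)

lemma iidProb_mono (hp : ∀ j, 0 ≤ p j) {E F : (Fin m → α) → Prop} [DecidablePred E]
    [DecidablePred F] (h : ∀ x, E x → F x) : iidProb p m E ≤ iidProb p m F := by
  have := mul_iidProb_le_sum hp (E := E) (c := 1) (g := fun x => if F x then 1 else 0)
    (fun x hx => by simp [h x hx]) (fun x => by positivity)
  rwa [one_mul] at this

lemma iidProb_le_sum_iidProb (hp : ∀ j, 0 ≤ p j) {ι : Type*} (S : Finset ι)
    {E : (Fin m → α) → Prop} [DecidablePred E] (F : ι → (Fin m → α) → Prop)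
    [∀ B, DecidablePred (F B)] (h : ∀ x, E x → ∃ B ∈ S, F B x) :
    iidProb p m E ≤ ∑ B ∈ S, iidProb p m (F B) := by
  have := mul_iidProb_le_sum hp (E := E) (c := 1)
    (g := fun x => ∑ B ∈ S, if F B x then 1 else 0) (fun x hx => ?_)
    (fun x => sum_nonneg fun B _ => by positivity)
  · simpa only [one_mul, mul_sum, iidProb, sum_comm (s := S)] using this
  · obtain ⟨B, hB, hFB⟩ := h x hx
    simpa [hFB] using single_le_sum (f := fun B => if F B x then (1 : ℝ) else 0)
      (fun B _ => by positivity) hB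

lemma iidProb_eq_zero {E : (Fin m → α) → Prop} [DecidablePred E]
    (h : ∀ x, E x → ∃ i, p (x i) = 0) : iidProb p m E = 0 := by
  refine sum_eq_zero fun x _ => ?_
  split_ifs with hE
  · obtain ⟨i, hi⟩ := h x hE
    simp [prod_eq_zero (f := fun i => p (x i)) (mem_univ i) hi]
  · simp

lemma iidProb_le_one (hp : ∀ j, 0 ≤ p j) (hp1 : ∑ j, p j = 1) (E : (Fin m → α) → Prop)
    [DecidablePred E] : iidProb p m E ≤ 1 := by
  have := mul_iidProb_le_sum hp (E := E) (c := 1) (g := fun _ => 1)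
    (fun _ _ => le_rfl) (fun _ => zero_le_one)
  simp_rw [one_mul, mul_one] at this
  rwa [← Fintype.sum_pow p m, hp1, one_pow] at this

end IidProb

lemma prod_ite_mem_eq_pow {α : Type*} [DecidableEq α] {m : ℕ} (x : Fin m → α) (B : Finset α)
    (t : ℝ) : ∏ i, (if x i ∈ B then t else 1) = t ^ #{i | x i ∈ B} := by
  rw [prod_ite, prod_const, prod_const_one, mul_one]

section Chernoff

variable {α : Type*} [Fintype α] [DecidableEq α] {p : α → ℝ} {m : ℕ}

lemma sum_mul_ite_mem (hp1 : ∑ j, p j = 1) (B : Finset α) (t : ℝ) :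
    ∑ j, p j * (if j ∈ B then t else 1) = 1 - ∑ j ∈ B, p j + (∑ j ∈ B, p j) * t := by
  have := sum_filter_add_sum_filter_not univ (· ∈ B) p
  rw [filter_mem_eq_inter, univ_inter, hp1] at this
  simp only [mul_ite, mul_one, sum_ite, filter_mem_eq_inter, univ_inter, ← sum_mul]
  linarith

/-- Chernoff's bound: `t^N ≥ t^s` on the event `N ≤ s`, and `E[t^N] = (1 - q + q t)^m` for the
number `N` of samples in `B`, where `q = p(B)`. -/
lemma rpow_mul_iidProb_card_le (hp : ∀ j, 0 ≤ p j) (hp1 : ∑ j, p j = 1) (B : Finset α)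
    {t : ℝ} (ht0 : 0 ≤ t) (ht1 : t ≤ 1) (s : ℝ) :
    t ^ s * iidProb p m (fun x => (#{i | x i ∈ B} : ℝ) ≤ s) ≤
      (1 - ∑ j ∈ B, p j + (∑ j ∈ B, p j) * t) ^ m := by
  calc t ^ s * iidProb p m (fun x => (#{i | x i ∈ B} : ℝ) ≤ s)
      ≤ ∑ x : Fin m → α, (∏ i, p (x i)) * ∏ i, (if x i ∈ B then t else 1) := by
        refine mul_iidProb_le_sum hp (fun x hx => ?_) (fun x => prod_nonneg fun i _ => ?_)
        · rw [prod_ite_mem_eq_pow, ← rpow_natCast]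
          exact rpow_le_rpow_of_exponent_ge' ht0 ht1 (Nat.cast_nonneg _) hx
        · split_ifs <;> linarith
    _ = (1 - ∑ j ∈ B, p j + (∑ j ∈ B, p j) * t) ^ m := by
        simp_rw [← prod_mul_distrib]
        rw [← Fintype.sum_pow (fun j => p j * if j ∈ B then t else 1), sum_mul_ite_mem hp1]

theorem iidProb_card_le_le_exp_neg_binKL (hp : ∀ j, 0 ≤ p j) (hp1 : ∑ j, p j = 1)
    (B : Finset α) {q a : ℝ} (hq : ∑ j ∈ B, p j = q) (hq1 : q < 1) (ha0 : 0 ≤ a)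
    (haq : a < q) :
    iidProb p m (fun x => (#{i | x i ∈ B} : ℝ) ≤ m * a) ≤ exp (-(m * binKL a q)) := by
  rcases ha0.eq_or_lt with rfl | ha0
  · have h := rpow_mul_iidProb_card_le (m := m) hp hp1 B le_rfl zero_le_one 0
    rw [rpow_zero, one_mul, hq, mul_zero, add_zero] at h
    have hD : -(m * binKL 0 q) = m * log (1 - q) := by simp [binKL]
    rwa [mul_zero, hD, exp_nat_mul, exp_log (by linarith)]
  · have hq0 : 0 < q := ha0.trans haq
    have ha1 : 0 < 1 - a := by linarith
    set t := a * (1 - q) / ((1 - a) * q) with ht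
    have ht0 : 0 < t := div_pos (mul_pos ha0 (by linarith)) (mul_pos ha1 hq0)
    have ht1 : t ≤ 1 := (div_le_one (mul_pos ha1 hq0)).2 (by nlinarith)
    have h := rpow_mul_iidProb_card_le (m := m) hp hp1 B ht0.le ht1 (m * a)
    have hR : (1 - ∑ j ∈ B, p j + (∑ j ∈ B, p j) * t) ^ m
        = exp (-(m * binKL a q)) * t ^ ((m : ℝ) * a) := by
      rw [hq, rpow_def_of_pos ht0, ← exp_add, ← exp_log (show 0 < 1 - q + q * t by positivity),
        ← exp_nat_mul]
      congr 1
      rw [show 1 - q + q * t = (1 - q) / (1 - a) by rw [ht]; field_simp; ring, ht,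
        log_div (by linarith) ha1.ne', log_div (by positivity) (by positivity),
        log_mul ha0.ne' (by linarith), log_mul ha1.ne' hq0.ne']
      simp only [binKL, binEntropy, log_inv]
      ring
    rw [hR, mul_comm] at h
    exact le_of_mul_le_mul_right h (by positivity)

lemma iidProb_card_le_eq_zero (hp : ∀ j, 0 ≤ p j) (hp1 : ∑ j, p j = 1) (B : Finset α)
    (hB : ∑ j ∈ B, p j = 1) {s : ℝ} (hs : s < m) :
    iidProb p m (fun x => (#{i | x i ∈ B} : ℝ) ≤ s) = 0 := by
  have hcompl : ∑ j ∈ Bᶜ, p j = 0 := by linarith [sum_add_sum_compl B p]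
  refine iidProb_eq_zero fun x hx => ?_
  obtain ⟨i, hi⟩ : ∃ i, x i ∉ B := by
    by_contra! hall
    rw [filter_true_of_mem fun i _ => hall i, card_univ, Fintype.card_fin] at hx
    linarith
  exact ⟨i, (sum_eq_zero_iff_of_nonneg fun j _ => hp j).1 hcompl (x i) (mem_compl.2 hi)⟩

end Chernoff

lemma sum_abs_eq_two_mul_sum_filter_pos {ι : Type*} [Fintype ι] {f : ι → ℝ}
    (hf : ∑ i, f i = 0) : ∑ i, |f i| = 2 * ∑ i with 0 < f i, f i := by
  have habs : ∀ i, |f i| = 2 * (if 0 < f i then f i else 0) - f i := fun i => by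
    split_ifs with h
    · rw [abs_of_pos h]; ring
    · rw [abs_of_nonpos (not_lt.1 h)]; ring
  simp only [habs, sum_sub_distrib, ← mul_sum, sum_filter, hf, sub_zero]

lemma exists_le_sum_of_le_sum_abs {ι : Type*} [Fintype ι] {f : ι → ℝ} (hf : ∑ i, f i = 0)
    {ε : ℝ} (hε : 0 < ε) (h : ε ≤ ∑ i, |f i|) :
    ∃ B : Finset ι, B ≠ ∅ ∧ B ≠ univ ∧ ε / 2 ≤ ∑ i ∈ B, f i := by
  rw [sum_abs_eq_two_mul_sum_filter_pos hf] at h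
  refine ⟨({i | 0 < f i} : Finset ι), ?_, ?_, by linarith⟩ <;> rintro hB <;> rw [hB] at h
  · simp at h; linarith
  · linarith

lemma sum_empDist {m : ℕ} (x : Fin m → Fin 3) (B : Finset (Fin 3)) :
    ∑ j ∈ B, empDist m x j = #{i | x i ∈ B} / m := by
  simp only [empDist, ← sum_div]
  rw [← Nat.cast_sum, sum_card_fiberwise_eq_card_filter]

lemma thetaOf_le_half (p : Fin 3 → ℝ) : thetaOf p ≤ 1 / 2 :=
  sup'_le _ _ fun A _ => by
    rcases le_total (∑ a ∈ A, p a) (1 - ∑ a ∈ A, p a) with h | h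
    · rw [min_eq_left h]; linarith
    · rw [min_eq_right h]; linarith

lemma min_le_thetaOf (p : Fin 3 → ℝ) (B : Finset (Fin 3)) :
    min (∑ j ∈ B, p j) (1 - ∑ j ∈ B, p j) ≤ thetaOf p :=
  le_sup' (fun A => min (∑ a ∈ A, p a) (1 - ∑ a ∈ A, p a)) (mem_powerset.2 (subset_univ B))

lemma phiOf_thetaOf_le {p : Fin 3 → ℝ} {B : Finset (Fin 3)} (h0 : 0 < ∑ j ∈ B, p j)
    (h1 : ∑ j ∈ B, p j < 1) : phiOf (thetaOf p) ≤ phiOf (∑ j ∈ B, p j) := by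
  have hmin := min_le_thetaOf p B
  have hθ := thetaOf_le_half p
  have hθ0 : 0 < thetaOf p := lt_of_lt_of_le (lt_min h0 (by linarith)) hmin
  refine phiOf_le_phiOf_of_abs_le h0 h1 hθ0 (by linarith) ?_
  rw [abs_of_nonneg (by linarith)]
  rcases le_total (∑ j ∈ B, p j) (1 - ∑ j ∈ B, p j) with h | h
  · rw [min_eq_left h] at hmin
    exact le_abs.2 (Or.inl (by linarith))
  · rw [min_eq_right h] at hmin
    exact le_abs.2 (Or.inr (by linarith))

lemma sum_empDist_univ {m : ℕ} (hm : 0 < m) (x : Fin m → Fin 3) : ∑ j, empDist m x j = 1 := by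
  rw [sum_empDist]
  simp [hm.ne']

lemma iidProb_le_sum_sub_empDist_le_exp {p : Fin 3 → ℝ} (hp : IsProbVec p) {m : ℕ}
    (hm : 0 < m) (B : Finset (Fin 3)) {ε : ℝ} (hε : 0 < ε) :
    iidProb p m (fun x => ε ≤ ∑ j ∈ B, (p j - empDist m x j)) ≤
      exp (-m * phiOf (thetaOf p) * ε ^ 2) := by
  set q := ∑ j ∈ B, p j
  have hm' : (0 : ℝ) < m := Nat.cast_pos.2 hm
  have hevent : ∀ x : Fin m → Fin 3, ε ≤ ∑ j ∈ B, (p j - empDist m x j) →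
      (#{i | x i ∈ B} : ℝ) ≤ m * (q - ε) := fun x hx => by
    rw [sum_sub_distrib, sum_empDist] at hx
    rw [mul_comm, ← div_le_iff₀ hm']
    linarith
  have hq1 : q ≤ 1 := hp.2 ▸ sum_le_sum_of_subset_of_nonneg (subset_univ B) fun j _ _ => hp.1 j
  refine (iidProb_mono hp.1 hevent).trans ?_
  rcases lt_or_ge (q - ε) 0 with hneg | hqε
  · rw [iidProb_eq_zero fun x hx => absurd hx
      (not_le.2 ((mul_neg_of_pos_of_neg hm' hneg).trans_le (Nat.cast_nonneg _)))]
    positivity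
  rcases hq1.eq_or_lt with hq1 | hq1
  · rw [iidProb_card_le_eq_zero hp.1 hp.2 B hq1 (by nlinarith)]
    positivity
  calc iidProb p m (fun x => (#{i | x i ∈ B} : ℝ) ≤ m * (q - ε))
      ≤ exp (-(m * binKL (q - ε) q)) :=
        iidProb_card_le_le_exp_neg_binKL hp.1 hp.2 B rfl hq1 hqε (by linarith)
    _ ≤ exp (-m * phiOf (thetaOf p) * ε ^ 2) := by
        have hKL := phiOf_mul_sq_le_binKL (by linarith) hq1 hqε (by linarith)
        have hθ := phiOf_thetaOf_le (B := B) (by linarith) hq1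
        rw [show q - ε - q = -ε by ring, neg_sq] at hKL
        refine exp_le_exp.2 ?_
        nlinarith [mul_le_mul_of_nonneg_right hθ (sq_nonneg ε)]

/-- Weissman et al. L1 deviation inequality for `m` i.i.d. samples from a categorical
distribution on three categories:
`Pr(‖p - p̂‖₁ ≥ α/2) ≤ 6·exp(-m·φ·α²/16)`. -/
theorem weissman_l1_concentration (m : ℕ) (p : Fin 3 → ℝ) (hp : IsProbVec p)
    (α : ℝ) (hα : 0 < α) :
    (∑ x : Fin m → Fin 3, (∏ i, p (x i)) *
        (if α / 2 ≤ ∑ j, |p j - empDist m x j| then 1 else 0)) ≤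
      6 * Real.exp (-(m : ℝ) * phiOf (thetaOf p) * α ^ 2 / 16) := by
  change iidProb p m (fun x => α / 2 ≤ ∑ j, |p j - empDist m x j|) ≤ _
  rcases Nat.eq_zero_or_pos m with rfl | hm
  · calc _ ≤ 1 := iidProb_le_one hp.1 hp.2 _
      _ ≤ _ := by norm_num
  have hS : #{B : Finset (Fin 3) | B ≠ ∅ ∧ B ≠ univ} = 6 := by decide
  calc _ ≤ ∑ B with B ≠ ∅ ∧ B ≠ univ,
        iidProb p m (fun x => α / 4 ≤ ∑ j ∈ B, (p j - empDist m x j)) := by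
        refine iidProb_le_sum_iidProb hp.1 _ _ fun x hx => ?_
        have hsum : ∑ j, (p j - empDist m x j) = 0 := by
          rw [sum_sub_distrib, hp.2, sum_empDist_univ hm, sub_self]
        obtain ⟨B, hB0, hB1, hB⟩ := exists_le_sum_of_le_sum_abs hsum (by positivity) hx
        exact ⟨B, by simp [hB0, hB1], by linarith⟩
    _ ≤ ∑ B with B ≠ ∅ ∧ B ≠ univ, exp (-m * phiOf (thetaOf p) * (α / 4) ^ 2) :=
        sum_le_sum fun B _ => iidProb_le_sum_sub_empDist_le_exp hp hm B (by positivity)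
    _ = _ := by
        rw [sum_const, hS, nsmul_eq_mul]
        ring_nf
end

section
/- Achievability bound for the ambiguity-preserving strategy: in the Chameleon game with N ≥ 3 players and K = l(N+1) words (l ≥ 2 an integer), under the non-chameleon strategy π^amb (each non-chameleon eliminates a uniformly random l-subset not containing the secret word, keeping the secret word live and the posterior uniform; players vote for the first player whose response is inconsistent, else player 1), for every chameleon strategy the non-chameleons win with probability at least ((log(N+1) + 0.4)/N)·((l−1)/l). -/
open Finset

/-! Formalization of Proposition 4 (achievability bound for the ambiguity-preserving
non-chameleon strategy `π^amb`) in the Chameleon game with `N` players and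
`K = l(N+1)` words. Responses are subsets of the word set; a history is the vector of
the `N` responses. Non-chameleons play `π^amb`: at turn `i` (0-indexed), if the previous
response `r_{i-1}` contains the secret word and has the right size `l(N+1-i)`, they
respond with a uniformly random subset of it of size `l(N-i)` containing the secret word;
otherwise they respond `null` (the empty set). Everyone votes for the first player whose
response has the wrong size or eliminates the secret word, else for player 1. -/

/-- The set of words, `K = l(N+1)`. -/
abbrev Word (N l : ℕ) := Fin (l * (N + 1))

/-- The response preceding turn `i`: the full word set for `i = 0`, else player `i-1`'s
response. -/
def prevSet (N l : ℕ) (h : Fin N → Finset (Word N l)) (i : Fin N) : Finset (Word N l) :=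
  if i.val = 0 then Finset.univ
  else h ⟨i.val - 1, Nat.lt_of_le_of_lt (Nat.sub_le _ _) i.isLt⟩

/-- Probability that a non-chameleon at turn `i` with secret word `w` and previous
response `prev` responds `r` under `π^amb`: uniform over valid subsets if the previous
response is consistent, otherwise deterministically `null = ∅`. -/
noncomputable def nonChamProb (N l : ℕ) (w : Word N l) (i : Fin N)
    (prev r : Finset (Word N l)) : ℝ :=
  if w ∈ prev ∧ prev.card = l * (N + 1 - i.val) then
    (if r ⊆ prev ∧ w ∈ r ∧ r.card = l * (N - i.val) then
      1 / ((prev.powerset.filter (fun s => w ∈ s ∧ s.card = l * (N - i.val))).card : ℝ)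
    else 0)
  else if r = ∅ then 1 else 0

/-- A chameleon strategy: a response as a function of its index and the list of previous
responses, and a final secret-word guess as a function of its index and the full history. -/
structure ChamStrategy (N l : ℕ) where
  respond : Fin N → List (Finset (Word N l)) → Finset (Word N l)
  guess : Fin N → (Fin N → Finset (Word N l)) → Word N l

/-- Probability of a full history `h` given chameleon index `c`, secret word `w`, and
chameleon strategy `σ`: non-chameleons follow `π^amb`, and the chameleon's coordinate must
equal the strategy's response to the previous responses. -/
noncomputable def histProb (N l : ℕ) (σ : ChamStrategy N l) (c : Fin N) (w : Word N l)
    (h : Fin N → Finset (Word N l)) : ℝ :=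
  ∏ i : Fin N,
    if i = c then
      (if h i = σ.respond c (List.ofFn (fun j : Fin c.val =>
          h ⟨j.val, Nat.lt_trans j.isLt c.isLt⟩)) then 1 else 0)
    else nonChamProb N l w i (prevSet N l h i) (h i)

/-- The voted player under `π^amb`: the first player whose response has the wrong size or
does not contain the secret word; player 1 (index 0) if every response is consistent. -/
def votedPlayer (N l : ℕ) [NeZero N] (w : Word N l)
    (h : Fin N → Finset (Word N l)) : Fin N :=
  let off := univ.filter (fun i : Fin N => w ∉ h i ∨ (h i).card ≠ l * (N - i.val))
  if hne : off.Nonempty then off.min' hne else 0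

/-- Winning probability of the non-chameleons under `π^amb` against chameleon strategy
`σ`: the chameleon index and the secret word are uniform, and the non-chameleons win iff
the voted player is the chameleon and the chameleon's guess misses the secret word. -/
noncomputable def nonChamWinProb (N l : ℕ) [NeZero N] (σ : ChamStrategy N l) : ℝ :=
  (1 / ((N : ℝ) * (l * (N + 1)))) * ∑ c : Fin N, ∑ w : Word N l,
    ∑ h : Fin N → Finset (Word N l),
      histProb N l σ c w h *
        (if votedPlayer N l w h = c ∧ σ.guess c h ≠ w then 1 else 0)


/-!
Fix the chameleon's index `c`. Under `π^amb` the responses before turn `c` form a chain of nested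
sets through the secret, and all chains of a given length through a given secret have the same
probability. Whatever the chameleon answers after a chain, at least `l` of the `l (N + 1 - c)`
words of the last response make that answer inconsistent, so the chameleon is voted, and at most
one of them is its guess: averaging over the secret, the non-chameleons win with probability at
least `(l - 1) / (l (N + 1 - c))` when `c ≥ 1`. For `c = 0` either the first answer is
inconsistent for at least `l` secrets, or the game runs to the end with `l` live words and one
guess; both give `(l - 1) / l`. Averaging over `c` yields `(l - 1) / (l N) · H_N`, and
`H_N - log (N + 1)` is increasing, with value above `0.4` at `N = 3`.
-/

namespace Chameleon

section General

variable {α : Type*} [DecidableEq α]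

theorem injOn_update_of_eq {ι α : Type*} [DecidableEq ι] (c : ι) (x₀ : α) (f : (ι → α) → α) :
    Set.InjOn (fun p => Function.update p c (f p)) {p | p c = x₀} := by
  intro p hp q hq hpq
  funext i
  rcases eq_or_ne i c with rfl | hi
  · exact hp.trans hq.symm
  · simpa [Function.update_of_ne hi] using congrFun hpq i

theorem card_powerset_filter_mem_card_eq {t : Finset α} {w : α}
    (hw : w ∈ t) {m : ℕ} (hm : 1 ≤ m) :
    (t.powerset.filter fun s => w ∈ s ∧ s.card = m).card = (t.card - 1).choose (m - 1) := by
  rw [← card_erase_of_mem hw, ← card_powersetCard]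
  refine card_bij (fun s _ => s.erase w) (fun s hs => ?_) (fun s₁ hs₁ s₂ hs₂ heq => ?_)
    (fun u hu => ?_)
  · simp only [mem_filter, mem_powerset] at hs
    rw [mem_powersetCard, card_erase_of_mem hs.2.1, hs.2.2]
    exact ⟨erase_subset_erase _ hs.1, rfl⟩
  · simp only [mem_filter, mem_powerset] at hs₁ hs₂
    rw [← insert_erase hs₁.2.1, ← insert_erase hs₂.2.1, heq]
  · rw [mem_powersetCard] at hu
    have hwu : w ∉ u := fun h => (mem_erase.mp (hu.1 h)).1 rfl
    refine ⟨insert w u, ?_, erase_insert hwu⟩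
    simp only [mem_filter, mem_powerset]
    refine ⟨insert_subset hw (hu.1.trans (erase_subset _ _)), mem_insert_self _ _, ?_⟩
    rw [card_insert_of_notMem hwu, hu.2]
    omega

theorem le_card_filter_not_mem_or_card_ne {A r : Finset α} {k m : ℕ} (hA : A.card = k + m) :
    m ≤ (A.filter fun w => w ∉ r ∨ r.card ≠ k).card := by
  by_cases hr : r.card = k
  · calc m ≤ (A \ r).card := by have := le_card_sdiff r A; omega
      _ ≤ _ := card_le_card fun w hw => by
        rw [mem_sdiff] at hw
        exact mem_filter.mpr ⟨hw.1, Or.inl hw.2⟩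
  · rw [filter_true_of_mem fun _ _ => Or.inr hr]
    omega

theorem sub_one_le_card_filter_and_ne {A : Finset α} {P : α → Prop} [DecidablePred P] {m : ℕ}
    (g : α) (hm : m ≤ (A.filter P).card) : m - 1 ≤ (A.filter fun w => P w ∧ g ≠ w).card := by
  have herase : (A.filter fun w => P w ∧ g ≠ w) = (A.filter P).erase g := by
    ext w
    simp only [mem_filter, mem_erase]
    tauto
  rw [herase]
  have := pred_card_le_card_erase (s := A.filter P) (a := g)
  omega

theorem prod_ite_lt_eq_prod_Ico {M : Type*} [CommMonoid M] (f : ℕ → M) {a b N : ℕ} (hb : b ≤ N) :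
    ∏ i : Fin N, (if a ≤ (i : ℕ) ∧ (i : ℕ) < b then f i else 1) = ∏ i ∈ Ico a b, f i := by
  rw [Fin.prod_univ_eq_prod_range (fun i => if a ≤ i ∧ i < b then f i else 1), ← prod_filter]
  congr 1
  ext i
  simp only [mem_filter, mem_range, mem_Ico]
  omega

theorem log_add_one_add_le_harmonic {n : ℕ} (hn : 3 ≤ n) :
    Real.log ((n : ℝ) + 1) + 0.4 ≤ harmonic n := by
  have hmono : Real.eulerMascheroniSeq 3 ≤ Real.eulerMascheroniSeq n :=
    Real.strictMono_eulerMascheroniSeq.monotone hn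
  have harmonic_three : (harmonic 3 : ℝ) = 11 / 6 := by
    norm_num [harmonic, sum_range_succ]
  have hlog4 : Real.log (3 + 1) = 2 * Real.log 2 := by
    rw [show (3 + 1 : ℝ) = 2 ^ 2 by norm_num, Real.log_pow, Nat.cast_ofNat]
  have hlog2 := Real.log_two_lt_d9
  rw [Real.eulerMascheroniSeq, Real.eulerMascheroniSeq, harmonic_three, Nat.cast_ofNat,
    hlog4] at hmono
  linarith

theorem sum_ite_zero_inv_eq_harmonic (N : ℕ) :
    ∑ c : Fin N, (if (c : ℕ) = 0 then 1 else ((N : ℝ) + 1 - c)⁻¹) = harmonic N := by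
  cases N with
  | zero => simp
  | succ M =>
    rw [Fin.sum_univ_eq_sum_range (fun c => if c = 0 then 1 else ((↑(M + 1) : ℝ) + 1 - c)⁻¹),
      sum_range_succ', harmonic, sum_range_succ', ← sum_range_reflect]
    push_cast
    rw [inv_one]
    congr 1
    refine sum_congr rfl fun j hj => ?_
    rw [mem_range] at hj
    rw [Nat.cast_sub (by omega), Nat.cast_sub (by omega)]
    ring_nf

end General

section Chains

variable (N l : ℕ)

/-- The number of `π^amb` responses at turn `i` that keep a given secret word. -/
def stepCount (i : ℕ) : ℕ := (l * (N + 1 - i) - 1).choose (l * (N - i) - 1)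

def chainCount (a b : ℕ) : ℕ := ∏ i ∈ Ico a b, stepCount N l i

/-- `prevSet N l` is `chainPrev N l 0 univ`. -/
def chainPrev (a : ℕ) (S : Finset (Word N l)) (h : Fin N → Finset (Word N l)) (i : Fin N) :
    Finset (Word N l) :=
  if (i : ℕ) = a then S else h ⟨i - 1, Nat.lt_of_le_of_lt (Nat.sub_le _ _) i.isLt⟩

def chains (a b : ℕ) (S : Finset (Word N l)) : Finset (Fin N → Finset (Word N l)) :=
  univ.filter fun h => (∀ i : Fin N, ((i : ℕ) < a ∨ b ≤ i) → h i = ∅) ∧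
    ∀ i : Fin N, a ≤ i → (i : ℕ) < b → h i ⊆ chainPrev N l a S h i ∧ (h i).card = l * (N - i)

def chainsThrough (a b : ℕ) (w : Word N l) (S : Finset (Word N l)) :
    Finset (Fin N → Finset (Word N l)) :=
  (chains N l a b S).filter fun h => ∀ i : Fin N, a ≤ i → (i : ℕ) < b → w ∈ h i

variable {N l}

theorem stepCount_pos (i : ℕ) : 0 < stepCount N l i :=
  Nat.choose_pos (Nat.sub_le_sub_right (Nat.mul_le_mul_left l (by omega)) 1)

theorem chainCount_pos (a b : ℕ) : 0 < chainCount N l a b :=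
  prod_pos fun i _ => stepCount_pos i

variable {a b : ℕ} {S : Finset (Word N l)} {w : Word N l} {h : Fin N → Finset (Word N l)}

theorem mem_chains :
    h ∈ chains N l a b S ↔ (∀ i : Fin N, ((i : ℕ) < a ∨ b ≤ i) → h i = ∅) ∧
      ∀ i : Fin N, a ≤ i → (i : ℕ) < b →
        h i ⊆ chainPrev N l a S h i ∧ (h i).card = l * (N - i) := by
  simp [chains]

theorem mem_chainsThrough :
    h ∈ chainsThrough N l a b w S ↔
      h ∈ chains N l a b S ∧ ∀ i : Fin N, a ≤ i → (i : ℕ) < b → w ∈ h i := by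
  simp [chainsThrough]

theorem mem_of_mem_chains (hh : h ∈ chains N l a b S) {k : Fin N} (hak : a ≤ k)
    (hkb : (k : ℕ) < b) (hw : w ∈ h k) : w ∈ S ∧ ∀ i : Fin N, a ≤ i → i ≤ k → w ∈ h i := by
  obtain ⟨n, hn⟩ : ∃ n, (k : ℕ) = a + n := ⟨k - a, by omega⟩
  induction n generalizing k with
  | zero =>
    have hS := (mem_chains.mp hh).2 k hak hkb |>.1 hw
    rw [chainPrev, if_pos (by omega)] at hS
    exact ⟨hS, fun i hai hik => by rwa [Fin.le_antisymm hik (Fin.le_def.mpr (by omega))]⟩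
  | succ n ih =>
    have hprev := (mem_chains.mp hh).2 k hak hkb |>.1 hw
    rw [chainPrev, if_neg (by omega)] at hprev
    obtain ⟨hS, hall⟩ := ih (by simp only; omega) (by simp only; omega) hprev (by simp only; omega)
    refine ⟨hS, fun i hai hik => ?_⟩
    rcases lt_or_eq_of_le hik with hlt | rfl
    · exact hall i hai (Fin.le_def.mpr (by rw [Fin.lt_def] at hlt; simp only; omega))
    · exact hw

theorem last_subset_of_mem_chains (hab : a < b) (hb : b ≤ N) (hh : h ∈ chains N l a b S) :
    h ⟨b - 1, by omega⟩ ⊆ S :=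
  fun _ hw => (mem_of_mem_chains hh (by simp only; omega) (by simp only; omega) hw).1

theorem chainsThrough_eq_filter_last (hab : a < b) (hb : b ≤ N) :
    chainsThrough N l a b w S = (chains N l a b S).filter fun h => w ∈ h ⟨b - 1, by omega⟩ := by
  refine filter_congr fun h hh => ⟨fun hall => hall _ (by simp only; omega) (by simp only; omega),
    fun hlast i hai hib => ?_⟩
  exact (mem_of_mem_chains hh (by simp only; omega) (by simp only; omega) hlast).2 i hai
    (Fin.le_def.mpr (by simp only; omega))

theorem chainsThrough_self : chainsThrough N l a a w S = {fun _ => ∅} := by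
  ext h
  simp only [mem_chainsThrough, mem_chains, mem_singleton]
  constructor
  · rintro ⟨⟨hnull, -⟩, -⟩
    exact funext fun i => hnull i (by omega)
  · rintro rfl
    exact ⟨⟨fun _ _ => rfl, fun i _ _ => by omega⟩, fun i _ _ => by omega⟩

theorem chainPrev_update (ha : a < N) (s : Finset (Word N l)) (p : Fin N → Finset (Word N l))
    {i : Fin N} (hi : a < i) :
    chainPrev N l a S (Function.update p ⟨a, ha⟩ s) i = chainPrev N l (a + 1) s p i := by
  unfold chainPrev
  rw [if_neg (by omega)]
  by_cases hia : (i : ℕ) = a + 1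
  · rw [if_pos hia, show (⟨i - 1, _⟩ : Fin N) = ⟨a, ha⟩ from Fin.ext (by simp only; omega),
      Function.update_self]
  · rw [if_neg hia, Function.update_of_ne (by rw [ne_eq, Fin.ext_iff]; simp only; omega)]

theorem update_mem_chainsThrough_iff (hab : a < b) (hb : b ≤ N) {s : Finset (Word N l)}
    {p : Fin N → Finset (Word N l)} (hpa : p ⟨a, by omega⟩ = ∅) :
    Function.update p ⟨a, by omega⟩ s ∈ chainsThrough N l a b w S ↔
      (s ⊆ S ∧ w ∈ s ∧ s.card = l * (N - a)) ∧ p ∈ chainsThrough N l (a + 1) b w s := by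
  have hne : ∀ i : Fin N, (i : ℕ) ≠ a → i ≠ ⟨a, by omega⟩ := fun i hi h => hi (by rw [h])
  simp only [mem_chainsThrough, mem_chains]
  constructor
  · rintro ⟨⟨hnull, hstep⟩, hw⟩
    have hsa := hstep ⟨a, by omega⟩ le_rfl hab
    rw [Function.update_self, chainPrev, if_pos rfl] at hsa
    have hwa := hw ⟨a, by omega⟩ le_rfl hab
    rw [Function.update_self] at hwa
    refine ⟨⟨hsa.1, hwa, hsa.2⟩, ⟨fun i hi => ?_, fun i hai hib => ?_⟩, fun i hai hib => ?_⟩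
    · by_cases hia : (i : ℕ) = a
      · rwa [show i = ⟨a, by omega⟩ from Fin.ext hia]
      · rw [← Function.update_of_ne (hne i hia) s p]
        exact hnull i (by omega)
    · rw [← chainPrev_update (by omega) s p (by omega),
        ← Function.update_of_ne (hne i (by omega)) s p]
      exact hstep i (by omega) hib
    · rw [← Function.update_of_ne (hne i (by omega)) s p]
      exact hw i (by omega) hib
  · rintro ⟨⟨hsS, hws, hsc⟩, ⟨hnull, hstep⟩, hw⟩
    refine ⟨⟨fun i hi => ?_, fun i hai hib => ?_⟩, fun i hai hib => ?_⟩
    · rw [Function.update_of_ne (hne i (by omega))]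
      exact hnull i (by omega)
    · by_cases hia : (i : ℕ) = a
      · rw [show i = ⟨a, by omega⟩ from Fin.ext hia, Function.update_self, chainPrev, if_pos rfl]
        exact ⟨hsS, hsc⟩
      · rw [chainPrev_update (by omega) s p (by omega), Function.update_of_ne (hne i hia)]
        exact hstep i (by omega) hib
    · by_cases hia : (i : ℕ) = a
      · rwa [show i = ⟨a, by omega⟩ from Fin.ext hia, Function.update_self]
      · rw [Function.update_of_ne (hne i hia)]
        exact hw i (by omega) hib

theorem chainsThrough_eq_biUnion (hab : a < b) (hb : b ≤ N) :
    chainsThrough N l a b w S =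
      (S.powerset.filter fun s => w ∈ s ∧ s.card = l * (N - a)).biUnion fun s =>
        (chainsThrough N l (a + 1) b w s).image fun p => Function.update p ⟨a, by omega⟩ s := by
  ext h
  simp only [mem_biUnion, mem_image, mem_filter, mem_powerset, and_assoc]
  constructor
  · intro hh
    have hupd : Function.update (Function.update h ⟨a, by omega⟩ ∅) ⟨a, by omega⟩
        (h ⟨a, by omega⟩) = h := by simp
    rw [← hupd, update_mem_chainsThrough_iff hab hb (Function.update_self ..)] at hh
    exact ⟨_, hh.1.1, hh.1.2.1, hh.1.2.2, _, hh.2, hupd⟩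
  · rintro ⟨s, hsS, hws, hsc, p, hp, rfl⟩
    have hpa : p ⟨a, by omega⟩ = ∅ :=
      (mem_chains.mp (mem_chainsThrough.mp hp).1).1 _ (Or.inl (by simp))
    exact (update_mem_chainsThrough_iff hab hb hpa).mpr ⟨⟨hsS, hws, hsc⟩, hp⟩

theorem card_chainsThrough (hl : 1 ≤ l) (hab : a ≤ b) (hb : b ≤ N) (hwS : w ∈ S)
    (hS : S.card = l * (N + 1 - a)) :
    (chainsThrough N l a b w S).card = chainCount N l a b := by
  obtain ⟨n, rfl⟩ := Nat.exists_eq_add_of_le hab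
  induction n generalizing a S with
  | zero => simp [chainsThrough_self, chainCount]
  | succ n ih =>
    have hdisj : ((S.powerset.filter fun s => w ∈ s ∧ s.card = l * (N - a)) :
        Set (Finset (Word N l))).PairwiseDisjoint fun s =>
          (chainsThrough N l (a + 1) (a + (n + 1)) w s).image
            fun p => Function.update p ⟨a, by omega⟩ s := by
      intro s _ t _ hst
      simp only [Function.onFun, disjoint_left, mem_image]
      rintro _ ⟨p, -, rfl⟩ ⟨q, -, hq⟩
      exact hst (by simpa using (congrFun hq ⟨a, by omega⟩).symm)
    have hcard : ∀ s ∈ S.powerset.filter fun s => w ∈ s ∧ s.card = l * (N - a),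
        ((chainsThrough N l (a + 1) (a + (n + 1)) w s).image
          fun p => Function.update p ⟨a, by omega⟩ s).card =
          chainCount N l (a + 1) (a + (n + 1)) := by
      intro s hs
      simp only [mem_filter, mem_powerset] at hs
      have hnull : ∀ p ∈ chainsThrough N l (a + 1) (a + (n + 1)) w s, p ⟨a, by omega⟩ = ∅ :=
        fun p hp => (mem_chains.mp (mem_chainsThrough.mp hp).1).1 _ (Or.inl (by simp))
      rw [card_image_of_injOn fun p hp q hq =>
          injOn_update_of_eq _ ∅ (fun _ => s) (hnull p hp) (hnull q hq),
        show a + (n + 1) = a + 1 + n by omega]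
      exact ih hs.2.1 (by rw [hs.2.2]; congr 1; omega) (by omega) (by omega)
    rw [chainsThrough_eq_biUnion (by omega) hb, card_biUnion hdisj, sum_congr rfl hcard, sum_const,
      card_powerset_filter_mem_card_eq hwS (Nat.one_le_iff_ne_zero.mpr
        (Nat.mul_ne_zero (by omega) (by omega))), hS, smul_eq_mul]
    simp only [chainCount]
    rw [prod_eq_prod_Ico_succ_bot (show a < a + (n + 1) by omega)]
    rfl

theorem sum_card_filter_last_eq (hab : a < b) (hb : b ≤ N)
    (P : Word N l → (Fin N → Finset (Word N l)) → Prop) [∀ w p, Decidable (P w p)] :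
    ∑ w ∈ S, ((chains N l a b S).filter fun p => w ∈ p ⟨b - 1, by omega⟩ ∧ P w p).card =
      ∑ p ∈ chains N l a b S, ((p ⟨b - 1, by omega⟩).filter fun w => P w p).card := by
  simp only [card_filter]
  rw [sum_comm]
  refine sum_congr rfl fun p hp => ?_
  have hlast := last_subset_of_mem_chains hab hb hp
  rw [← card_filter, ← card_filter]
  congr 1
  ext w
  simp only [mem_filter]
  exact ⟨fun h => h.2, fun h => ⟨hlast h.1, h⟩⟩

theorem card_chains_mul (hl : 1 ≤ l) (hab : a < b) (hb : b ≤ N)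
    (hS : S.card = l * (N + 1 - a)) :
    (chains N l a b S).card * (l * (N + 1 - b)) = S.card * chainCount N l a b := by
  have hdc := sum_card_filter_last_eq (S := S) hab hb fun _ _ => True
  simp only [and_true, filter_true] at hdc
  rw [← sum_const_nat fun w hw => card_chainsThrough hl hab.le hb hw hS]
  simp_rw [chainsThrough_eq_filter_last hab hb]
  rw [hdc, ← smul_eq_mul, ← sum_const]
  refine sum_congr rfl fun p hp => ?_
  rw [((mem_chains.mp hp).2 ⟨b - 1, by omega⟩ (by simp only; omega) (by simp only; omega)).2]
  congr 1
  simp only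
  omega

end Chains

section Game

variable {N l : ℕ} {w : Word N l}

theorem nonChamProb_nonneg (i : Fin N) (prev r : Finset (Word N l)) :
    0 ≤ nonChamProb N l w i prev r := by
  unfold nonChamProb
  split_ifs <;> positivity

theorem nonChamProb_empty_of_inconsistent {i : Fin N} {prev : Finset (Word N l)}
    (hprev : ¬(w ∈ prev ∧ prev.card = l * (N + 1 - i))) : nonChamProb N l w i prev ∅ = 1 := by
  rw [nonChamProb, if_neg hprev, if_pos rfl]

theorem nonChamProb_eq_inv_stepCount (hl : 1 ≤ l) {i : Fin N} {prev r : Finset (Word N l)}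
    (hw : w ∈ prev) (hprev : prev.card = l * (N + 1 - i)) (hr : r ⊆ prev) (hwr : w ∈ r)
    (hrc : r.card = l * (N - i)) : nonChamProb N l w i prev r = (stepCount N l i : ℝ)⁻¹ := by
  have hm : 1 ≤ l * (N - i) := Nat.one_le_iff_ne_zero.mpr (Nat.mul_ne_zero (by omega) (by omega))
  rw [nonChamProb, if_pos ⟨hw, hprev⟩, if_pos ⟨hr, hwr, hrc⟩,
    card_powerset_filter_mem_card_eq hw hm, hprev, one_div, stepCount]

theorem histProb_nonneg (σ : ChamStrategy N l) (c : Fin N) (w : Word N l)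
    (h : Fin N → Finset (Word N l)) : 0 ≤ histProb N l σ c w h :=
  prod_nonneg fun i _ => by
    split_ifs
    · exact zero_le_one
    · exact le_rfl
    · exact nonChamProb_nonneg i _ _

def chamResponse (σ : ChamStrategy N l) (c : Fin N) (h : Fin N → Finset (Word N l)) :
    Finset (Word N l) :=
  σ.respond c (List.ofFn fun j : Fin c => h ⟨j, Nat.lt_trans j.isLt c.isLt⟩)

def withCham (σ : ChamStrategy N l) (c : Fin N) (p : Fin N → Finset (Word N l)) :
    Fin N → Finset (Word N l) :=
  Function.update p c (chamResponse σ c p)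

variable {σ : ChamStrategy N l} {c : Fin N} {p : Fin N → Finset (Word N l)}

theorem chamResponse_update (s : Finset (Word N l)) :
    chamResponse σ c (Function.update p c s) = chamResponse σ c p := by
  unfold chamResponse
  congr 2
  funext j
  exact Function.update_of_ne (Fin.ne_of_val_ne (by simp only; omega)) _ _

theorem chamResponse_zero [NeZero N] : chamResponse σ 0 p = σ.respond 0 [] := by
  rw [chamResponse, List.ofFn_eq_nil_iff.mpr (Fin.val_zero N)]

theorem withCham_self : withCham σ c p c = chamResponse σ c p := Function.update_self ..

theorem withCham_of_ne {i : Fin N} (hi : i ≠ c) : withCham σ c p i = p i :=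
  Function.update_of_ne hi ..

noncomputable def condWinProb [NeZero N] (σ : ChamStrategy N l) (c : Fin N) (w : Word N l) : ℝ :=
  ∑ h : Fin N → Finset (Word N l),
    histProb N l σ c w h * (if votedPlayer N l w h = c ∧ σ.guess c h ≠ w then 1 else 0)

theorem nonChamWinProb_eq_sum_condWinProb [NeZero N] (σ : ChamStrategy N l) :
    nonChamWinProb N l σ = 1 / ((N : ℝ) * (l * (N + 1))) * ∑ c, ∑ w, condWinProb σ c w :=
  rfl

theorem card_mul_le_condWinProb [NeZero N] {α : Type*} (D : Finset α)
    {F : α → Fin N → Finset (Word N l)} (hF : Set.InjOn F D) {v : ℝ}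
    (hprob : ∀ x ∈ D, histProb N l σ c w (F x) = v)
    (hwin : ∀ x ∈ D, votedPlayer N l w (F x) = c ∧ σ.guess c (F x) ≠ w) :
    D.card * v ≤ condWinProb σ c w := by
  calc (D.card : ℝ) * v
      = ∑ x ∈ D, histProb N l σ c w (F x) *
          (if votedPlayer N l w (F x) = c ∧ σ.guess c (F x) ≠ w then 1 else 0) := by
        rw [sum_congr rfl fun x hx => by rw [hprob x hx, if_pos (hwin x hx), mul_one], sum_const,
          nsmul_eq_mul]
    _ = ∑ h ∈ D.image F, histProb N l σ c w h *
          (if votedPlayer N l w h = c ∧ σ.guess c h ≠ w then 1 else 0) := by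
        rw [sum_image hF]
    _ ≤ condWinProb σ c w := by
        unfold condWinProb
        exact sum_le_univ_sum_of_nonneg fun h =>
          mul_nonneg (histProb_nonneg σ c w h) (by split_ifs <;> norm_num)

theorem votedPlayer_eq_of_offends [NeZero N] {h : Fin N → Finset (Word N l)}
    (hoff : w ∉ h c ∨ (h c).card ≠ l * (N - c))
    (hbefore : ∀ i < c, w ∈ h i ∧ (h i).card = l * (N - i)) : votedPlayer N l w h = c := by
  have hmem : c ∈ univ.filter fun i : Fin N => w ∉ h i ∨ (h i).card ≠ l * (N - i) :=
    mem_filter.mpr ⟨mem_univ c, hoff⟩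
  rw [votedPlayer, dif_pos ⟨c, hmem⟩]
  refine le_antisymm (min'_le _ _ hmem) (le_min' _ _ _ fun i hi => not_lt.mp fun hic => ?_)
  obtain ⟨hw, hcard⟩ := hbefore i hic
  rcases (mem_filter.mp hi).2 with h1 | h2
  exacts [h1 hw, h2 hcard]

theorem votedPlayer_eq_zero_of_consistent [NeZero N] {h : Fin N → Finset (Word N l)}
    (hall : ∀ i, w ∈ h i ∧ (h i).card = l * (N - i)) : votedPlayer N l w h = 0 := by
  rw [votedPlayer, dif_neg (not_nonempty_iff_eq_empty.mpr (filter_eq_empty_iff.mpr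
    fun i _ => not_or.mpr ⟨not_not.mpr (hall i).1, not_not.mpr (hall i).2⟩))]

end Game

section Evaluation

variable {N l : ℕ} {w : Word N l} {σ : ChamStrategy N l} {c : Fin N}
  {p : Fin N → Finset (Word N l)} {a b : ℕ} {S : Finset (Word N l)}

theorem chainPrev_consistent (hwS : w ∈ S) (hS : S.card = l * (N + 1 - a))
    (hp : p ∈ chainsThrough N l a b w S) {i : Fin N} (hai : a ≤ i) (hib : (i : ℕ) < b) :
    w ∈ chainPrev N l a S p i ∧ (chainPrev N l a S p i).card = l * (N + 1 - i) := by
  obtain ⟨hchain, hw⟩ := mem_chainsThrough.mp hp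
  unfold chainPrev
  split_ifs with hia
  · rw [hS, hia]
    exact ⟨hwS, rfl⟩
  · refine ⟨hw _ (by simp only; omega) (by simp only; omega), ?_⟩
    rw [((mem_chains.mp hchain).2 _ (by simp only; omega) (by simp only; omega)).2]
    congr 1
    simp only
    omega

/-- Off the chain every factor of `histProb` is `1`: the chameleon follows `σ`, and the other
turns are null answers to an inconsistent previous response. -/
theorem histProb_withCham (hl : 1 ≤ l) (hb : b ≤ N) (hc : (c : ℕ) < a ∨ b ≤ c) (hwS : w ∈ S)
    (hS : S.card = l * (N + 1 - a)) (hp : p ∈ chainsThrough N l a b w S)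
    (hprev : ∀ i : Fin N, a ≤ i → (i : ℕ) < b →
      prevSet N l (withCham σ c p) i = chainPrev N l a S p i)
    (hnull : ∀ i : Fin N, i ≠ c → ((i : ℕ) < a ∨ b ≤ i) →
      ¬(w ∈ prevSet N l (withCham σ c p) i ∧
        (prevSet N l (withCham σ c p) i).card = l * (N + 1 - i))) :
    histProb N l σ c w (withCham σ c p) = (chainCount N l a b : ℝ)⁻¹ := by
  obtain ⟨hchain, hw⟩ := mem_chainsThrough.mp hp
  have hfactor : ∀ i : Fin N,
      (if i = c then (if withCham σ c p i = chamResponse σ c (withCham σ c p) then (1 : ℝ) else 0)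
        else nonChamProb N l w i (prevSet N l (withCham σ c p) i) (withCham σ c p i)) =
      if a ≤ (i : ℕ) ∧ (i : ℕ) < b then (stepCount N l i : ℝ)⁻¹ else 1 := by
    intro i
    rcases eq_or_ne i c with rfl | hic
    · rw [if_pos rfl, if_pos (by rw [withCham_self, withCham, chamResponse_update]),
        if_neg (by omega)]
    rw [if_neg hic, withCham_of_ne hic]
    by_cases hi : a ≤ (i : ℕ) ∧ (i : ℕ) < b
    · obtain ⟨hsub, hcard⟩ := (mem_chains.mp hchain).2 i hi.1 hi.2
      obtain ⟨hwprev, hprevc⟩ := chainPrev_consistent hwS hS hp hi.1 hi.2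
      rw [if_pos hi, hprev i hi.1 hi.2]
      exact nonChamProb_eq_inv_stepCount hl hwprev hprevc hsub (hw i hi.1 hi.2) hcard
    · rw [if_neg hi, (mem_chains.mp hchain).1 i (by omega)]
      exact nonChamProb_empty_of_inconsistent (hnull i hic (by omega))
  refine (prod_congr rfl fun i _ => hfactor i).trans ?_
  rw [prod_ite_lt_eq_prod_Ico (fun k => (stepCount N l k : ℝ)⁻¹) hb, chainCount, Nat.cast_prod,
    prod_inv_distrib]

theorem histProb_withCham_of_offends (hl : 1 ≤ l) (hp : p ∈ chainsThrough N l 0 c w univ)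
    (hoff : w ∉ chamResponse σ c p ∨ (chamResponse σ c p).card ≠ l * (N - c)) :
    histProb N l σ c w (withCham σ c p) = (chainCount N l 0 c : ℝ)⁻¹ := by
  have hnull := (mem_chains.mp (mem_chainsThrough.mp hp).1).1
  refine histProb_withCham hl c.isLt.le (Or.inr le_rfl) (mem_univ w) (by simp) hp
    (fun i _ hic => ?_) (fun i hic hi => ?_)
  · unfold prevSet chainPrev
    split_ifs
    · rfl
    · exact withCham_of_ne (Fin.ne_of_val_ne (by simp only; omega))
  · have hci : (c : ℕ) < i := lt_of_le_of_ne (by omega) (Fin.val_ne_of_ne hic.symm)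
    unfold prevSet
    rw [if_neg (by omega)]
    by_cases hprev : (i : ℕ) - 1 = c
    · rw [show (⟨i - 1, _⟩ : Fin N) = c from Fin.ext hprev, withCham_self]
      rintro ⟨hw, hcard⟩
      exact hoff.elim (· hw) (· (by rw [hcard]; congr 1; omega))
    · rw [withCham_of_ne (Fin.ne_of_val_ne hprev), hnull _ (Or.inr (by simp only; omega))]
      exact fun h => notMem_empty w h.1

variable [NeZero N]

theorem votedPlayer_withCham_of_offends (hp : p ∈ chainsThrough N l 0 c w univ)
    (hoff : w ∉ chamResponse σ c p ∨ (chamResponse σ c p).card ≠ l * (N - c)) :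
    votedPlayer N l w (withCham σ c p) = c := by
  obtain ⟨hchain, hw⟩ := mem_chainsThrough.mp hp
  refine votedPlayer_eq_of_offends (by rwa [withCham_self]) fun i hic => ?_
  rw [withCham_of_ne hic.ne]
  exact ⟨hw i (Nat.zero_le _) hic, ((mem_chains.mp hchain).2 i (Nat.zero_le _) hic).2⟩

theorem histProb_withCham_zero (hl : 1 ≤ l) (hw : w ∈ σ.respond 0 [])
    (hr : (σ.respond 0 []).card = l * N) (hp : p ∈ chainsThrough N l 1 N w (σ.respond 0 [])) :
    histProb N l σ 0 w (withCham σ 0 p) = (chainCount N l 1 N : ℝ)⁻¹ := by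
  refine histProb_withCham hl le_rfl (Or.inl (by simp)) hw (by rw [hr, Nat.add_sub_cancel]) hp
    (fun i hi _ => ?_) (fun i hi h => ?_)
  · unfold prevSet chainPrev
    rw [if_neg (by omega)]
    split_ifs with hi1
    · rw [show (⟨i - 1, _⟩ : Fin N) = 0 from Fin.ext (by simp only [Fin.val_zero]; omega),
        withCham_self, chamResponse_zero]
    · exact withCham_of_ne (Fin.ne_of_val_ne (by simp only [Fin.val_zero]; omega))
  · have := Fin.val_ne_of_ne hi
    rw [Fin.val_zero] at this
    omega

theorem votedPlayer_withCham_zero (hw : w ∈ σ.respond 0 []) (hr : (σ.respond 0 []).card = l * N)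
    (hp : p ∈ chainsThrough N l 1 N w (σ.respond 0 [])) :
    votedPlayer N l w (withCham σ 0 p) = 0 := by
  obtain ⟨hchain, hwp⟩ := mem_chainsThrough.mp hp
  refine votedPlayer_eq_zero_of_consistent fun i => ?_
  rcases eq_or_ne i 0 with rfl | hi
  · rw [withCham_self, chamResponse_zero, Fin.val_zero, Nat.sub_zero]
    exact ⟨hw, hr⟩
  · have hi1 : 1 ≤ (i : ℕ) :=
      Nat.one_le_iff_ne_zero.mpr fun h0 => hi (Fin.ext (by rw [h0, Fin.val_zero]))
    rw [withCham_of_ne hi]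
    exact ⟨hwp i hi1 i.isLt, ((mem_chains.mp hchain).2 i hi1 i.isLt).2⟩

end Evaluation

section Bounds

variable {N l : ℕ} [NeZero N] {σ : ChamStrategy N l}

theorem condWinProb_nonneg (c : Fin N) (w : Word N l) : 0 ≤ condWinProb σ c w :=
  sum_nonneg fun h _ => mul_nonneg (histProb_nonneg σ c w h) (by split_ifs <;> norm_num)

/-- Double counting of pairs of a secret and a chain through it. -/
theorem le_sum_condWinProb_of_chains (hl : 1 ≤ l) {c : Fin N} {a b : ℕ} {S : Finset (Word N l)}
    (hab : a < b) (hb : b ≤ N) (hc : (c : ℕ) < a ∨ b ≤ c) (hS : S.card = l * (N + 1 - a))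
    (Q : Word N l → (Fin N → Finset (Word N l)) → Prop) [∀ w p, Decidable (Q w p)]
    (hprob : ∀ w ∈ S, ∀ p ∈ chainsThrough N l a b w S, Q w p →
      histProb N l σ c w (withCham σ c p) = (chainCount N l a b : ℝ)⁻¹)
    (hwin : ∀ w ∈ S, ∀ p ∈ chainsThrough N l a b w S, Q w p →
      votedPlayer N l w (withCham σ c p) = c ∧ σ.guess c (withCham σ c p) ≠ w)
    (hcount : ∀ p ∈ chains N l a b S, l - 1 ≤ ((p ⟨b - 1, by omega⟩).filter (Q · p)).card) :
    ((l : ℝ) - 1) * S.card / (l * (N + 1 - b) : ℕ) ≤ ∑ w ∈ S, condWinProb σ c w := by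
  let D := fun w => (chains N l a b S).filter fun p => w ∈ p ⟨b - 1, by omega⟩ ∧ Q w p
  have hD : ∀ w ∈ S, ((D w).card : ℝ) * (chainCount N l a b : ℝ)⁻¹ ≤ condWinProb σ c w := by
    intro w hw
    have hthrough : ∀ p ∈ D w, p ∈ chainsThrough N l a b w S ∧ Q w p := fun p hp => by
      rw [chainsThrough_eq_filter_last hab hb, mem_filter]
      exact ⟨⟨(mem_filter.mp hp).1, (mem_filter.mp hp).2.1⟩, (mem_filter.mp hp).2.2⟩
    have hnull : ∀ p ∈ D w, p c = ∅ := fun p hp =>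
      (mem_chains.mp (mem_filter.mp hp).1).1 c (by omega)
    exact card_mul_le_condWinProb (D w)
      (fun p hp q hq => injOn_update_of_eq c ∅ _ (hnull p hp) (hnull q hq))
      (fun p hp => hprob w hw p (hthrough p hp).1 (hthrough p hp).2)
      (fun p hp => hwin w hw p (hthrough p hp).1 (hthrough p hp).2)
  have hcard : (l - 1) * (chains N l a b S).card ≤ ∑ w ∈ S, (D w).card := by
    rw [sum_card_filter_last_eq hab hb Q, mul_comm, ← smul_eq_mul]
    exact card_nsmul_le_sum _ _ _ hcount
  have hchains : ((chains N l a b S).card : ℝ) * (l * (N + 1 - b) : ℕ) =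
      S.card * chainCount N l a b := by
    exact_mod_cast card_chains_mul hl hab hb hS
  have hPP : (chainCount N l a b : ℝ) ≠ 0 := by exact_mod_cast (chainCount_pos a b).ne'
  have hL : ((l * (N + 1 - b) : ℕ) : ℝ) ≠ 0 := by
    exact_mod_cast Nat.mul_ne_zero (by omega) (by omega)
  calc ((l : ℝ) - 1) * S.card / (l * (N + 1 - b) : ℕ)
      = ((l - 1) * (chains N l a b S).card : ℕ) * (chainCount N l a b : ℝ)⁻¹ := by
        rw [div_eq_iff hL, Nat.cast_mul, Nat.cast_sub hl, Nat.cast_one]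
        field_simp
        linear_combination (1 - (l : ℝ)) * hchains
    _ ≤ (∑ w ∈ S, (D w).card : ℕ) * (chainCount N l a b : ℝ)⁻¹ := by gcongr
    _ = ∑ w ∈ S, ((D w).card : ℝ) * (chainCount N l a b : ℝ)⁻¹ := by rw [Nat.cast_sum, sum_mul]
    _ ≤ ∑ w ∈ S, condWinProb σ c w := sum_le_sum hD

theorem card_le_sum_condWinProb {c : Fin N} {T U : Finset (Word N l)} (hTU : T ⊆ U)
    (hT : ∀ w ∈ T, 1 ≤ condWinProb σ c w) : (T.card : ℝ) ≤ ∑ w ∈ U, condWinProb σ c w :=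
  calc (T.card : ℝ) = ∑ _w ∈ T, 1 := by rw [sum_const, nsmul_one]
    _ ≤ ∑ w ∈ T, condWinProb σ c w := sum_le_sum hT
    _ ≤ ∑ w ∈ U, condWinProb σ c w :=
      sum_le_sum_of_subset_of_nonneg hTU fun w _ _ => condWinProb_nonneg c w

theorem le_sum_condWinProb_of_pos (hl : 1 ≤ l) {c : Fin N} (hc : 0 < (c : ℕ)) :
    ((l : ℝ) - 1) * (N + 1) * ((N : ℝ) + 1 - c)⁻¹ ≤ ∑ w, condWinProb σ c w := by
  have key := le_sum_condWinProb_of_chains (σ := σ) (S := univ) hl hc c.isLt.le (Or.inr le_rfl)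
    (by simp)
    (fun w p => (w ∉ chamResponse σ c p ∨ (chamResponse σ c p).card ≠ l * (N - c)) ∧
      σ.guess c (withCham σ c p) ≠ w)
    (fun w _ p hp hQ => histProb_withCham_of_offends hl hp hQ.1)
    (fun w _ p hp hQ => ⟨votedPlayer_withCham_of_offends hp hQ.1, hQ.2⟩)
    (fun p hp => sub_one_le_card_filter_and_ne _ (le_card_filter_not_mem_or_card_ne (by
      rw [((mem_chains.mp hp).2 ⟨c - 1, by omega⟩ (by simp only; omega) (by simp only; omega)).2]
      rw [show N - (c - 1 : ℕ) = N - c + 1 by omega, mul_add_one])))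
  convert key using 1
  rw [card_univ, Fintype.card_fin, Nat.cast_mul, Nat.cast_mul, Nat.cast_sub (by omega)]
  push_cast
  have hpos : (0 : ℝ) < N + 1 - c := by
    rw [sub_pos]
    exact_mod_cast (by omega : (c : ℕ) < N + 1)
  field_simp

theorem one_le_condWinProb_zero (hl : 1 ≤ l) {w : Word N l}
    (hoff : w ∉ σ.respond 0 [] ∨ (σ.respond 0 []).card ≠ l * N)
    (hg : σ.guess 0 (withCham σ 0 fun _ => ∅) ≠ w) : 1 ≤ condWinProb σ 0 w := by
  have hp : (fun _ => ∅) ∈ chainsThrough N l 0 ((0 : Fin N) : ℕ) w univ := by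
    rw [Fin.val_zero, chainsThrough_self]
    exact mem_singleton_self _
  have hoff' : w ∉ chamResponse σ 0 (fun _ => ∅) ∨
      (chamResponse σ 0 fun _ => ∅).card ≠ l * (N - ((0 : Fin N) : ℕ)) := by
    rwa [chamResponse_zero, Fin.val_zero, Nat.sub_zero]
  simpa using card_mul_le_condWinProb ({fun _ => ∅} : Finset (Fin N → Finset (Word N l)))
    (F := withCham σ 0) (by rw [coe_singleton]; exact Set.injOn_singleton _ _) (v := 1)
    (fun p hp' => by
      rw [mem_singleton.mp hp', histProb_withCham_of_offends hl hp hoff', Fin.val_zero]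
      simp [chainCount])
    (fun p hp' => by
      rw [mem_singleton.mp hp']
      exact ⟨votedPlayer_withCham_of_offends hp hoff', hg⟩)

theorem le_sum_condWinProb_respond_zero (hl : 1 ≤ l) (hN : 1 < N)
    (hr : (σ.respond 0 []).card = l * N) :
    ((l : ℝ) - 1) * N ≤ ∑ w ∈ σ.respond 0 [], condWinProb σ 0 w := by
  have key := le_sum_condWinProb_of_chains (σ := σ) (c := 0) hl hN le_rfl (Or.inl (by simp))
    (by rw [hr, Nat.add_sub_cancel]) (fun w p => σ.guess 0 (withCham σ 0 p) ≠ w)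
    (fun w hw p hp _ => histProb_withCham_zero hl hw hr hp)
    (fun w hw p hp hg => ⟨votedPlayer_withCham_zero hw hr hp, hg⟩)
    (fun p hp => by
      have hlast := (mem_chains.mp hp).2 ⟨N - 1, by omega⟩ (by simp only; omega)
        (by simp only; omega)
      rw [filter_ne]
      refine le_trans ?_ pred_card_le_card_erase
      rw [hlast.2, show N - (N - 1) = 1 by omega, mul_one])
  convert key using 1
  rw [hr, Nat.cast_mul, Nat.cast_mul, Nat.add_sub_cancel_left, Nat.cast_one, mul_one]
  field_simp

theorem le_sum_condWinProb_zero (hl : 1 ≤ l) (hN : 1 < N) :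
    ((l : ℝ) - 1) * (N + 1) ≤ ∑ w, condWinProb σ 0 w := by
  set g := σ.guess 0 (withCham σ 0 fun _ => ∅)
  have hK : (univ : Finset (Word N l)).card = l * N + l := by
    rw [card_univ, Fintype.card_fin, mul_add_one]
  by_cases hr : (σ.respond 0 []).card = l * N
  · have hcard : l - 1 ≤ ((univ \ σ.respond 0 []).erase g).card := by
      have := pred_card_le_card_erase (s := univ \ σ.respond 0 []) (a := g)
      rw [card_sdiff_of_subset (subset_univ _), hK, hr] at this
      omega
    have hout : (l : ℝ) - 1 ≤ ∑ w ∈ univ \ σ.respond 0 [], condWinProb σ 0 w := by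
      refine le_trans ?_ (card_le_sum_condWinProb (erase_subset _ _) fun w hw =>
        one_le_condWinProb_zero hl (Or.inl (mem_sdiff.mp (mem_of_mem_erase hw)).2)
          (ne_of_mem_erase hw).symm)
      rw [← Nat.cast_one, ← Nat.cast_sub hl]
      exact_mod_cast hcard
    rw [← sum_sdiff (subset_univ (σ.respond 0 []))]
    linarith [le_sum_condWinProb_respond_zero (σ := σ) hl hN hr]
  · calc ((l : ℝ) - 1) * (N + 1) ≤ ((univ.erase g).card : ℕ) := by
          rw [card_erase_of_mem (mem_univ g), hK, Nat.cast_sub (by omega), Nat.cast_add,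
            Nat.cast_mul]
          push_cast
          linarith [(N.cast_nonneg : (0 : ℝ) ≤ N)]
      _ ≤ ∑ w, condWinProb σ 0 w := card_le_sum_condWinProb (erase_subset _ _) fun w hw =>
          one_le_condWinProb_zero hl (Or.inr hr) (ne_of_mem_erase hw).symm

theorem le_sum_condWinProb (hl : 1 ≤ l) (hN : 1 < N) (c : Fin N) :
    ((l : ℝ) - 1) * (N + 1) * (if (c : ℕ) = 0 then 1 else ((N : ℝ) + 1 - c)⁻¹) ≤
      ∑ w, condWinProb σ c w := by
  split_ifs with hc
  · rw [mul_one, show c = 0 from Fin.ext (by rw [hc, Fin.val_zero])]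
    exact le_sum_condWinProb_zero hl hN
  · exact le_sum_condWinProb_of_pos hl (Nat.pos_of_ne_zero hc)

end Bounds

end Chameleon

open Chameleon

/-- Proposition 4: for every chameleon strategy, the non-chameleons playing `π^amb` win
with probability at least `((log(N+1) + 0.4)/N)·((l-1)/l)`. -/
theorem amb_strategy_win_prob_lower_bound (N l : ℕ) [NeZero N]
    (hN : 3 ≤ N) (hl : 2 ≤ l) (σ : ChamStrategy N l) :
    ((Real.log ((N : ℝ) + 1) + 0.4) / N) * (((l : ℝ) - 1) / l) ≤
      nonChamWinProb N l σ := by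
  have hsum : ((l : ℝ) - 1) * (N + 1) * harmonic N ≤ ∑ c, ∑ w, condWinProb σ c w := by
    rw [← sum_ite_zero_inv_eq_harmonic, mul_sum]
    exact sum_le_sum fun c _ => le_sum_condWinProb (by omega) (by omega) c
  have hNpos : (0 : ℝ) < N := by exact_mod_cast (by omega : 0 < N)
  have hlpos : (0 : ℝ) < l := by exact_mod_cast (by omega : 0 < l)
  have hl1 : (0 : ℝ) ≤ l - 1 := by
    rw [sub_nonneg]
    exact_mod_cast (by omega : 1 ≤ l)
  rw [nonChamWinProb_eq_sum_condWinProb]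
  calc ((Real.log ((N : ℝ) + 1) + 0.4) / N) * (((l : ℝ) - 1) / l)
      ≤ (harmonic N / N) * (((l : ℝ) - 1) / l) := by
        gcongr
        exact log_add_one_add_le_harmonic hN
    _ = 1 / ((N : ℝ) * (l * (N + 1))) * (((l : ℝ) - 1) * (N + 1) * harmonic N) := by
        field_simp
    _ ≤ 1 / ((N : ℝ) * (l * (N + 1))) * ∑ c, ∑ w, condWinProb σ c w := by gcongr
end
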